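/- arXiv:2401.01332 — 11 statements merged into one kernel-verified Lean document; each statement's English description precedes it below -/
import Mathlib

section
/- Let k be a positive integer and let G be a bipartite graph with parts of size 2k+1 and minimum degree at least k+1. Then for every edge e of G there exists a perfect matching of G containing e. -/
/-!
A `(2k+1, k+1)`-bigraph encoded by a neighborhood function
`N : Fin (2*k+1) → Finset (Fin (2*k+1))`; a perfect matching is an equivalence
`f` with `f x ∈ N x` for all `x`.  Every edge lies in a perfect matching.
-/

theorem stmt2 (k : ℕ) (hk : 1 ≤ k)
    (N : Fin (2 * k + 1) → Finset (Fin (2 * k + 1)))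
    (hA : ∀ a, k + 1 ≤ (N a).card)
    (hB : ∀ b : Fin (2 * k + 1), k + 1 ≤ (Finset.univ.filter (fun a => b ∈ N a)).card)
    (a b : Fin (2 * k + 1)) (hab : b ∈ N a) :
    ∃ f : Fin (2 * k + 1) ≃ Fin (2 * k + 1), f a = b ∧ ∀ x, f x ∈ N x := by
  classical
  set t : Fin (2 * k + 1) → Finset (Fin (2 * k + 1)) :=
    fun x => if x = a then {b} else N x \ {b} with ht
  have hall0 : ∀ s : Finset (Fin (2 * k + 1)), a ∉ s → s.card ≤ (s.biUnion t).card := by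
    intro s ha
    rcases Finset.eq_empty_or_nonempty s with rfl | ⟨x, hx⟩
    · simp
    by_cases hs : s.card ≤ k
    · have hxa : x ≠ a := fun h => ha (h ▸ hx)
      have h1 : t x ⊆ s.biUnion t := Finset.subset_biUnion_of_mem t hx
      have h2 : k ≤ (t x).card := by
        have hAx := hA x
        have hc : (N x).card - ({b} : Finset (Fin (2 * k + 1))).card ≤ (N x \ {b}).card :=
          Finset.le_card_sdiff _ _
        simp only [Finset.card_singleton] at hc
        simp only [ht, if_neg hxa]
        omega
      calc s.card ≤ k := hs
        _ ≤ (t x).card := h2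
        _ ≤ _ := Finset.card_le_card h1
    · push_neg at hs
      have hsub : Finset.univ \ {b} ⊆ s.biUnion t := by
        intro b' hb'
        simp only [Finset.mem_sdiff, Finset.mem_singleton] at hb'
        by_contra hc
        have hfil : Finset.univ.filter (fun x => b' ∈ N x) ⊆ Finset.univ \ s := by
          intro x hxf
          simp only [Finset.mem_filter] at hxf
          simp only [Finset.mem_sdiff, Finset.mem_univ, true_and]
          intro hxs
          refine hc (Finset.mem_biUnion.2 ⟨x, hxs, ?_⟩)
          have hxa : x ≠ a := fun h => ha (h ▸ hxs)
          simp [ht, if_neg hxa, hxf.2, hb'.2]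
        have h1 := hB b'
        have h2 := Finset.card_le_card hfil
        have h3 : (Finset.univ \ s).card = (2 * k + 1) - s.card := by
          rw [Finset.card_sdiff_of_subset (Finset.subset_univ s), Finset.card_univ, Fintype.card_fin]
        omega
      have hsc : s.card ≤ 2 * k := by
        have hsub' : s ⊆ Finset.univ \ {a} := by
          intro x hxs
          simp only [Finset.mem_sdiff, Finset.mem_univ, true_and, Finset.mem_singleton]
          exact fun h => ha (h ▸ hxs)
        have h2 := Finset.card_le_card hsub'
        have h3 : (Finset.univ \ ({a} : Finset (Fin (2 * k + 1)))).card = 2 * k := by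
          rw [Finset.card_sdiff_of_subset (by simp), Finset.card_univ, Fintype.card_fin]; simp
        omega
      have hbc : 2 * k ≤ (s.biUnion t).card := by
        have h2 := Finset.card_le_card hsub
        have h3 : (Finset.univ \ ({b} : Finset (Fin (2 * k + 1)))).card = 2 * k := by
          rw [Finset.card_sdiff_of_subset (by simp), Finset.card_univ, Fintype.card_fin]; simp
        omega
      omega
  have hall : ∀ s : Finset (Fin (2 * k + 1)), s.card ≤ (s.biUnion t).card := by
    intro s
    by_cases ha : a ∈ s
    · have hs' := hall0 (s.erase a) (Finset.notMem_erase a s)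
      have hbn : b ∉ (s.erase a).biUnion t := by
        simp only [Finset.mem_biUnion]
        rintro ⟨x, hxs, hxt⟩
        have hxa : x ≠ a := Finset.ne_of_mem_erase hxs
        simp [ht, if_neg hxa] at hxt
      have hsub : insert b ((s.erase a).biUnion t) ⊆ s.biUnion t := by
        intro y hy
        rcases Finset.mem_insert.1 hy with rfl | hy
        · exact Finset.mem_biUnion.2 ⟨a, ha, by simp [ht]⟩
        · rcases Finset.mem_biUnion.1 hy with ⟨x, hxs, hxt⟩
          exact Finset.mem_biUnion.2 ⟨x, Finset.mem_of_mem_erase hxs, hxt⟩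
      have h2 := Finset.card_le_card hsub
      rw [Finset.card_insert_of_notMem hbn] at h2
      have hce : (s.erase a).card = s.card - 1 := Finset.card_erase_of_mem ha
      have h1 : 1 ≤ s.card := Finset.card_pos.2 ⟨a, ha⟩
      omega
    · exact hall0 s ha
  obtain ⟨f, hfinj, hft⟩ := (Finset.all_card_le_biUnion_card_iff_exists_injective t).1 hall
  have hbij : Function.Bijective f := Finite.injective_iff_bijective.1 hfinj
  refine ⟨Equiv.ofBijective f hbij, ?_, ?_⟩
  · have := hft a
    simpa [ht] using this
  · intro x
    have hx := hft x
    by_cases h : x = a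
    · subst h
      simp only [ht, if_pos rfl, Finset.mem_singleton] at hx
      simpa [Equiv.ofBijective, hx] using hab
    · simp only [ht, if_neg h, Finset.mem_sdiff] at hx
      exact hx.1
end

section
/- Let k be a positive integer and let G be a bipartite graph with parts A, B of size 2k+1 and minimum degree at least k. If G has no perfect matching, then there exist X ⊆ A and Y ⊆ B with |X| = |Y| = k+1 and no edges between X and Y; moreover, X is complete to B \ Y and Y is complete to A \ X. -/
/-!
A `(2k+1, k)`-bigraph encoded by `N : Fin (2*k+1) → Finset (Fin (2*k+1))`
(with `b ∈ N a` meaning the `A`-vertex `a` is adjacent to the `B`-vertex `b`).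
If there is no perfect matching, there are sets `X ⊆ A` and `Y ⊆ B` of size
`k+1` with no edges between them, `X` complete to `B \ Y` and `Y` complete
to `A \ X`.
-/

theorem stmt3 (k : ℕ) (hk : 1 ≤ k)
    (N : Fin (2 * k + 1) → Finset (Fin (2 * k + 1)))
    (hA : ∀ a, k ≤ (N a).card)
    (hB : ∀ b : Fin (2 * k + 1), k ≤ (Finset.univ.filter (fun a => b ∈ N a)).card)
    (hnm : ¬ ∃ f : Fin (2 * k + 1) ≃ Fin (2 * k + 1), ∀ a, f a ∈ N a) :
    ∃ X Y : Finset (Fin (2 * k + 1)),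
      X.card = k + 1 ∧ Y.card = k + 1 ∧
      (∀ a ∈ X, ∀ b ∈ Y, b ∉ N a) ∧
      (∀ a ∈ X, ∀ b, b ∉ Y → b ∈ N a) ∧
      (∀ b ∈ Y, ∀ a, a ∉ X → b ∈ N a) := by
  -- Hall's condition must fail
  have hall : ¬ ∀ s : Finset (Fin (2*k+1)), s.card ≤ (s.biUnion N).card := by
    intro h
    obtain ⟨f, hf, hfm⟩ :=
      (Finset.all_card_le_biUnion_card_iff_existsInjective' N).mp h
    exact hnm ⟨Equiv.ofBijective f (Finite.injective_iff_bijective.mp hf),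
      fun a => hfm a⟩
  push_neg at hall
  obtain ⟨S, hS⟩ := hall
  set T := S.biUnion N with hT
  -- S is nonempty
  have hSne : S.Nonempty := by
    rw [Finset.nonempty_iff_ne_empty]
    rintro rfl
    simp at hS
  obtain ⟨a0, ha0⟩ := hSne
  have hNsub : ∀ a ∈ S, N a ⊆ T := fun a ha => Finset.subset_biUnion_of_mem N ha
  have hTk : k ≤ T.card := le_trans (hA a0) (Finset.card_le_card (hNsub a0 ha0))
  have hSk : k + 1 ≤ S.card := by omega
  -- any b outside T has all its neighbours outside S
  have hbT : ∀ b, b ∉ T → (Finset.univ.filter (fun a => b ∈ N a)) ⊆ Finset.univ \ S := by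
    intro b hb a ha
    simp only [Finset.mem_filter, Finset.mem_univ, true_and] at ha
    simp only [Finset.mem_sdiff, Finset.mem_univ, true_and]
    intro haS
    exact hb (hNsub a haS ha)
  -- T is not everything
  have hTne : T ≠ Finset.univ := by
    intro h
    have : T.card = 2*k+1 := by rw [h]; simp
    have h2 : S.card ≤ 2*k+1 := by simpa using Finset.card_le_univ S
    omega
  obtain ⟨b0, hb0⟩ : ∃ b, b ∉ T := by
    by_contra hc
    push_neg at hc
    exact hTne (Finset.eq_univ_of_forall hc)
  have hSc : (Finset.univ \ S).card = 2*k+1 - S.card := by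
    rw [Finset.card_sdiff_of_subset (Finset.subset_univ S)]; simp
  have hk1 : k ≤ (Finset.univ \ S).card :=
    le_trans (hB b0) (Finset.card_le_card (hbT b0 hb0))
  have hScard : S.card ≤ 2*k+1 := le_trans (Finset.card_le_card (Finset.subset_univ S)) (by simp)
  have hSeq : S.card = k + 1 := by omega
  have hTcard : T.card = k := by omega
  -- N a = T for a ∈ S
  have hNeq : ∀ a ∈ S, N a = T := by
    intro a ha
    apply Finset.eq_of_subset_of_card_le (hNsub a ha)
    rw [hTcard]; exact hA a
  refine ⟨S, Finset.univ \ T, hSeq, ?_, ?_, ?_, ?_⟩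
  · rw [Finset.card_sdiff_of_subset (Finset.subset_univ T), hTcard]
    simp; omega
  · intro a ha b hb
    rw [Finset.mem_sdiff] at hb
    rw [hNeq a ha]
    exact hb.2
  · intro a ha b hb
    rw [hNeq a ha]
    simp only [Finset.mem_sdiff, Finset.mem_univ, true_and, not_not] at hb
    exact hb
  · intro b hb a haS
    rw [Finset.mem_sdiff] at hb
    by_contra hna
    have hsub : (Finset.univ.filter (fun a' => b ∈ N a')) ⊆ (Finset.univ \ S) \ {a} := by
      intro x hx
      simp only [Finset.mem_filter, Finset.mem_univ, true_and] at hx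
      simp only [Finset.mem_sdiff, Finset.mem_univ, true_and, Finset.mem_singleton]
      constructor
      · intro hxS
        rw [hNeq x hxS] at hx
        exact hb.2 hx
      · rintro rfl; exact hna hx
    have := le_trans (hB b) (Finset.card_le_card hsub)
    have hle : ((Finset.univ \ S) \ {a}).card ≤ (Finset.univ \ S).card - 1 := by
      rw [Finset.card_sdiff_of_subset (by simpa using haS)]
      simp
    omega
end

section
/- Let k be a positive integer and let G be a bipartite graph with parts A, B of size 2k+1 and minimum degree at least k. If G has no perfect matching, then the pair (X, Y) with X ⊆ A, Y ⊆ B, |X| = |Y| = k+1 and no edges between X and Y is unique. -/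
/-!
A `(2k+1, k)`-bigraph encoded by `N : Fin (2*k+1) → Finset (Fin (2*k+1))`.
If there is no perfect matching, then the pair `(X, Y)` with `|X| = |Y| = k+1`
and no edges between `X` and `Y` is unique.
-/

theorem stmt4 (k : ℕ) (hk : 1 ≤ k)
    (N : Fin (2 * k + 1) → Finset (Fin (2 * k + 1)))
    (hA : ∀ a, k ≤ (N a).card)
    (hB : ∀ b : Fin (2 * k + 1), k ≤ (Finset.univ.filter (fun a => b ∈ N a)).card)
    (hnm : ¬ ∃ f : Fin (2 * k + 1) ≃ Fin (2 * k + 1), ∀ a, f a ∈ N a) :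
    ∀ X₁ Y₁ X₂ Y₂ : Finset (Fin (2 * k + 1)),
      X₁.card = k + 1 → Y₁.card = k + 1 → (∀ a ∈ X₁, ∀ b ∈ Y₁, b ∉ N a) →
      X₂.card = k + 1 → Y₂.card = k + 1 → (∀ a ∈ X₂, ∀ b ∈ Y₂, b ∉ N a) →
      X₁ = X₂ ∧ Y₁ = Y₂ := by
  intro X₁ Y₁ X₂ Y₂ hX₁ hY₁ hE₁ hX₂ hY₂ hE₂
  have hcard : Fintype.card (Fin (2 * k + 1)) = 2 * k + 1 := Fintype.card_fin _
  -- key lemma A: for a in X, Y = (N a)ᶜ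
  have keyA : ∀ (X Y : Finset (Fin (2 * k + 1))), Y.card = k + 1 →
      (∀ a ∈ X, ∀ b ∈ Y, b ∉ N a) → ∀ a ∈ X, Y = (N a)ᶜ := by
    intro X Y hY hE a ha
    have hsub : N a ⊆ Yᶜ := fun b hb =>
      Finset.mem_compl.2 (fun hbY => hE a ha b hbY hb)
    have hcc : Yᶜ.card = k := by
      rw [Finset.card_compl, hcard, hY]; omega
    have : N a = Yᶜ := Finset.eq_of_subset_of_card_le hsub (by rw [hcc]; exact hA a)
    rw [this, compl_compl]
  have keyB : ∀ (X Y : Finset (Fin (2 * k + 1))), X.card = k + 1 →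
      (∀ a ∈ X, ∀ b ∈ Y, b ∉ N a) → ∀ b ∈ Y,
      X = (Finset.univ.filter (fun a => b ∈ N a))ᶜ := by
    intro X Y hX hE b hb
    have hsub : (Finset.univ.filter (fun a => b ∈ N a)) ⊆ Xᶜ := by
      intro a ha
      simp only [Finset.mem_filter, Finset.mem_univ, true_and] at ha
      exact Finset.mem_compl.2 (fun haX => hE a haX b hb ha)
    have hcc : Xᶜ.card = k := by
      rw [Finset.card_compl, hcard, hX]; omega
    have : (Finset.univ.filter (fun a => b ∈ N a)) = Xᶜ :=
      Finset.eq_of_subset_of_card_le hsub (by rw [hcc]; exact hB b)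
    rw [this, compl_compl]
  -- X₁ ∩ X₂ is nonempty
  have hXint : (X₁ ∩ X₂).Nonempty := by
    rw [← Finset.card_pos]
    have h1 := Finset.card_inter_add_card_union X₁ X₂
    have h2 : (X₁ ∪ X₂).card ≤ 2 * k + 1 := le_trans (Finset.card_le_univ _) (le_of_eq hcard)
    omega
  obtain ⟨a, ha⟩ := hXint
  have hY12 : Y₁ = Y₂ := by
    rw [keyA X₁ Y₁ hY₁ hE₁ a (Finset.mem_inter.1 ha).1,
        keyA X₂ Y₂ hY₂ hE₂ a (Finset.mem_inter.1 ha).2]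
  have hYne : Y₁.Nonempty := Finset.card_pos.1 (by omega)
  obtain ⟨b, hb⟩ := hYne
  have hX12 : X₁ = X₂ := by
    rw [keyB X₁ Y₁ hX₁ hE₁ b hb, keyB X₂ Y₂ hX₂ hE₂ b (hY12 ▸ hb)]
  exact ⟨hX12, hY12⟩
end

section
/- Let k ≥ 2 be an integer and let G be a bipartite graph with parts A, B of size 2k+1 and minimum degree at least k. If G has a perfect matching, then there exists a vertex v' ∈ A such that for every v ∈ A with v ≠ v' there exist two perfect matchings M₁ and M₂ of G containing distinct edges incident with v. -/
/-!
Fix the perfect matching `f` and let `a → a'` when `a` is adjacent to `f a'`. A directed cycle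
through `v` is an `f`-alternating cycle, and switching `f` along it gives a perfect matching
that moves the edge at `v`; so it suffices that at most one vertex lies on no cycle.
The minimum degree makes all in- and out-degrees at least `k - 1 ≥ 1`. If `a` lies on no cycle,
its forward and its backward reachable sets each contain at least `k + 1` vertices
(`a`, an out-neighbour `c`, and the out-neighbours of `c`) and meet only in `a`, so they cover
all `2k + 1` vertices with exactly `k + 1` each. Another vertex `b` on no cycle lies in one of
them, say the forward one; then the forward set of `b` is contained in that of `a` minus `a`,
which is too small.
-/

open Finset Relation

namespace List

variable {α : Type*} {r : α → α → Prop}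

theorem exists_nodup_isChain_cons_of_relationReflTransGen {a b : α} (h : ReflTransGen r a b) :
    ∃ l, IsChain r (a :: l) ∧ (a :: l).Nodup ∧ (a :: l).getLast (cons_ne_nil _ _) = b := by
  induction h using ReflTransGen.head_induction_on with
  | refl => exact ⟨[], .singleton _, nodup_singleton _, rfl⟩
  | @head a c hac _ ih =>
    obtain ⟨l, hchain, hnd, hlast⟩ := ih
    by_cases ha : a ∈ c :: l
    · obtain ⟨s, t, hst⟩ := append_of_mem ha
      have hsuf : a :: t <:+ c :: l := ⟨s, hst.symm⟩
      refine ⟨t, hchain.suffix hsuf, hnd.sublist hsuf.sublist, ?_⟩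
      simp_rw [hst] at hlast
      rwa [getLast_append_of_ne_nil _ (cons_ne_nil _ _)] at hlast
    · exact ⟨c :: l, .cons_cons hac hchain, nodup_cons.2 ⟨ha, hnd⟩,
        by rwa [getLast_cons_cons]⟩

theorem rel_formPerm_apply [DecidableEq α] {a : α} {l : List α} (hnd : (a :: l).Nodup)
    (hchain : IsChain r (a :: l)) (hlast : r ((a :: l).getLast (cons_ne_nil _ _)) a)
    {x : α} (hx : x ∈ a :: l) : r x (formPerm (a :: l) x) := by
  obtain ⟨i, hi, rfl⟩ := mem_iff_getElem.1 hx
  rw [formPerm_apply_getElem _ hnd]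
  rcases lt_or_ge (i + 1) (a :: l).length with hlt | hge
  · simpa only [Nat.mod_eq_of_lt hlt] using isChain_iff_getElem.1 hchain i hlt
  · obtain rfl : i = l.length := by simp only [length_cons] at hi hge; omega
    simpa [getLast_eq_getElem] using hlast

end List

namespace Relation

variable {α : Type*} {r : α → α → Prop}

theorem TransGen.exists_perm [DecidableEq α] (hr : ∀ a, ¬ r a a) {a : α} (h : TransGen r a a) :
    ∃ σ : Equiv.Perm α, σ a ≠ a ∧ ∀ x, σ x = x ∨ r x (σ x) := by
  obtain ⟨c, hac, hca⟩ := TransGen.tail'_iff.1 h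
  obtain ⟨l, hchain, hnd, rfl⟩ := List.exists_nodup_isChain_cons_of_relationReflTransGen hac
  have hσ : ∀ x ∈ a :: l, r x (List.formPerm (a :: l) x) :=
    fun x hx => List.rel_formPerm_apply hnd hchain hca hx
  refine ⟨List.formPerm (a :: l), fun h => hr a (by simpa [h] using hσ a List.mem_cons_self),
    fun x => ?_⟩
  by_cases hx : x ∈ a :: l
  · exact .inr (hσ x hx)
  · exact .inl (List.formPerm_apply_of_notMem hx)

section Reachability

variable [Fintype α] [DecidableRel r] {d : ℕ} {a b : α}

open scoped Classical in
theorem add_two_le_card_reflTransGen (hr : ∀ a, ¬ r a a) (hd : 0 < d)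
    (hout : ∀ a, d ≤ #{b | r a b}) (ha : ¬ TransGen r a a) :
    d + 2 ≤ #{b | ReflTransGen r a b} := by
  obtain ⟨c, hac⟩ : ∃ c, r a c := by
    obtain ⟨c, hc⟩ := card_pos.1 (hd.trans_le (hout a))
    exact ⟨c, (mem_filter.1 hc).2⟩
  have hsub : insert a (insert c ({b | r c b} : Finset α)) ⊆
      ({b | ReflTransGen r a b} : Finset α) := by
    intro b hb
    simp only [mem_insert, mem_filter, mem_univ, true_and] at hb ⊢
    rcases hb with rfl | rfl | hcb
    · exact .refl
    · exact .single hac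
    · exact .tail (.single hac) hcb
  have hc : c ∉ ({b | r c b} : Finset α) := by simp [hr]
  have ha' : a ∉ insert c ({b | r c b} : Finset α) := by
    simp only [mem_insert, mem_filter, mem_univ, true_and, not_or]
    exact ⟨fun h => hr a (h ▸ hac), fun hca => ha (.tail (.single hac) hca)⟩
  calc d + 2 ≤ #{b | r c b} + 2 := by have := hout c; omega
    _ = #(insert a (insert c ({b | r c b} : Finset α))) := by
      rw [card_insert_of_notMem ha', card_insert_of_notMem hc]
    _ ≤ _ := card_le_card hsub

open scoped Classical in
theorem not_reflTransGen_of_card_le (hr : ∀ a, ¬ r a a) (hd : 0 < d)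
    (hout : ∀ a, d ≤ #{b | r a b}) (hcard : #{x | ReflTransGen r a x} ≤ d + 2) (hab : a ≠ b)
    (hb : ¬ TransGen r b b) : ¬ ReflTransGen r a b := by
  intro hab'
  have hsub : ({x | ReflTransGen r b x} : Finset α) ⊆
      ({x | ReflTransGen r a x} : Finset α).erase a := by
    intro x hx
    simp only [mem_erase, mem_filter, mem_univ, true_and] at hx ⊢
    refine ⟨?_, hab'.trans hx⟩
    rintro rfl
    exact hb (((reflTransGen_iff_eq_or_transGen.1 hab').resolve_left hab.symm).trans_right hx)
  have := card_le_card hsub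
  rw [card_erase_of_mem (mem_filter.2 ⟨mem_univ _, .refl⟩)] at this
  have := add_two_le_card_reflTransGen hr hd hout hb
  omega

open scoped Classical in
theorem eq_of_not_transGen_self (hcard : Fintype.card α ≤ 2 * d + 3) (hr : ∀ a, ¬ r a a)
    (hd : 0 < d) (hout : ∀ a, d ≤ #{b | r a b}) (hin : ∀ b, d ≤ #{a | r a b})
    (ha : ¬ TransGen r a a) (hb : ¬ TransGen r b b) : a = b := by
  have ha' : ¬ TransGen (Function.swap r) a a := by rwa [transGen_swap]
  have hb' : ¬ TransGen (Function.swap r) b b := by rwa [transGen_swap]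
  set X : Finset α := {x | ReflTransGen r a x}
  set Y : Finset α := {x | ReflTransGen (Function.swap r) a x}
  have hX : d + 2 ≤ #X := add_two_le_card_reflTransGen hr hd hout ha
  have hY : d + 2 ≤ #Y := add_two_le_card_reflTransGen (r := Function.swap r) hr hd hin ha'
  have hXY : X ∩ Y = {a} := by
    ext x
    simp only [X, Y, mem_inter, mem_filter, mem_univ, true_and, mem_singleton, reflTransGen_swap]
    refine ⟨fun ⟨hax, hxa⟩ => ?_, by rintro rfl; exact ⟨.refl, .refl⟩⟩
    by_contra hne
    exact ha (((reflTransGen_iff_eq_or_transGen.1 hax).resolve_left hne).trans_left hxa)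
  have hunion := card_union_add_card_inter X Y
  rw [hXY, card_singleton] at hunion
  have := card_le_univ (X ∪ Y)
  have hU : X ∪ Y = univ := eq_univ_of_card _ (by omega)
  by_contra hab
  rcases mem_union.1 (hU ▸ mem_univ b) with hbX | hbY
  · exact not_reflTransGen_of_card_le hr hd hout (show #X ≤ d + 2 by omega) hab hb
      (by simpa [X] using hbX)
  · exact not_reflTransGen_of_card_le (r := Function.swap r) hr hd hin
      (show #Y ≤ d + 2 by omega) hab hb' (by simpa [Y] using hbY)

end Reachability

end Relation

section Matching

variable {α β : Type*} (N : α → Finset β) (f : α ≃ β)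

def SwitchRel (a a' : α) : Prop := a ≠ a' ∧ f a' ∈ N a

variable {N f}

theorem exists_matching_ne_of_transGen [DecidableEq α] (hf : ∀ a, f a ∈ N a) {v : α}
    (h : TransGen (SwitchRel N f) v v) : ∃ g : α ≃ β, (∀ a, g a ∈ N a) ∧ g v ≠ f v := by
  obtain ⟨σ, hσv, hσ⟩ := h.exists_perm fun a h => h.1 rfl
  refine ⟨σ.trans f, fun a => ?_, f.injective.ne hσv⟩
  rcases hσ a with h | h
  · simpa [h] using hf a
  · exact h.2

variable [Fintype α] [DecidableEq α] [DecidableEq β] [DecidableRel (SwitchRel N f)]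

theorem card_le_card_switchRel_add_one (a : α) : #(N a) ≤ #{a' | SwitchRel N f a a'} + 1 :=
  calc #(N a) ≤ #{a' | f a' ∈ N a} :=
        card_le_card_of_injOn f.symm (fun b hb => by simpa using hb) f.symm.injective.injOn
    _ ≤ #(insert a ({a' | SwitchRel N f a a'} : Finset α)) := card_le_card fun a' ha' => by
        rcases eq_or_ne a a' with rfl | h
        · exact mem_insert_self _ _
        · exact mem_insert_of_mem (mem_filter.2 ⟨mem_univ _, h, (mem_filter.1 ha').2⟩)
    _ ≤ _ := card_insert_le _ _

theorem card_filter_mem_le_card_switchRel_add_one (a' : α) :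
    #{a | f a' ∈ N a} ≤ #{a | SwitchRel N f a a'} + 1 :=
  calc #{a | f a' ∈ N a} ≤ #(insert a' ({a | SwitchRel N f a a'} : Finset α)) :=
        card_le_card fun a ha => by
        rcases eq_or_ne a a' with rfl | h
        · exact mem_insert_self _ _
        · exact mem_insert_of_mem (mem_filter.2 ⟨mem_univ _, h, (mem_filter.1 ha).2⟩)
    _ ≤ _ := card_insert_le _ _

end Matching

theorem stmt5 (k : ℕ) (hk : 2 ≤ k)
    (N : Fin (2 * k + 1) → Finset (Fin (2 * k + 1)))
    (hA : ∀ a, k ≤ (N a).card)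
    (hB : ∀ b : Fin (2 * k + 1), k ≤ (Finset.univ.filter (fun a => b ∈ N a)).card)
    (f : Fin (2 * k + 1) ≃ Fin (2 * k + 1)) (hf : ∀ a, f a ∈ N a) :
    ∃ v' : Fin (2 * k + 1), ∀ v, v ≠ v' →
      ∃ f₁ f₂ : Fin (2 * k + 1) ≃ Fin (2 * k + 1),
        (∀ a, f₁ a ∈ N a) ∧ (∀ a, f₂ a ∈ N a) ∧ f₁ v ≠ f₂ v := by
  classical
  have hout : ∀ a, k - 1 ≤ #{a' | SwitchRel N f a a'} := fun a => by
    have := card_le_card_switchRel_add_one (N := N) (f := f) a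
    have := hA a
    omega
  have hin : ∀ a', k - 1 ≤ #{a | SwitchRel N f a a'} := fun a' => by
    have := card_filter_mem_le_card_switchRel_add_one (N := N) (f := f) a'
    have := hB (f a')
    omega
  have hacyclic : ∀ v, (∀ f₁ f₂ : Fin (2 * k + 1) ≃ Fin (2 * k + 1), (∀ a, f₁ a ∈ N a) →
      (∀ a, f₂ a ∈ N a) → f₁ v = f₂ v) → ¬ TransGen (SwitchRel N f) v v := fun v hv hcyc => by
    obtain ⟨g, hg, hne⟩ := exists_matching_ne_of_transGen hf hcyc
    exact hne (hv g f hg hf)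
  by_contra! H
  obtain ⟨v₁, -, hv₁⟩ := H 0
  obtain ⟨v₂, hne, hv₂⟩ := H v₁
  exact hne (eq_of_not_transGen_self (d := k - 1) (by simp only [Fintype.card_fin]; omega)
    (fun a h => h.1 rfl) (by omega) hout hin (hacyclic v₂ hv₂) (hacyclic v₁ hv₁))
end

section
/- Let H be a bipartite graph with parts A, B, where |A| ∈ {2k, 2k+1} and |B| = |A| for some positive integer k. List the vertices of A as a₁,…,a_{|A|} in nondecreasing order of degree and similarly b₁,…,b_{|A|} for B, and suppose d(a_i) ≥ min{i−1, k} and d(b_i) ≥ min{i−1, |B|−k} for all i. Then H has a perfect matching unless there exists i' ∈ [k] with |N({a₁,…,a_{i'}})| = i'−1, or there exists i' ∈ [|B|−k] with |N({b₁,…,b_{i'}})| = i'−1. -/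
private lemma card_filter_lt_aux (n s : ℕ) (h : s ≤ n) :
    (Finset.univ.filter fun j : Fin n => (j : ℕ) < s).card = s := by
  have he : (Finset.univ.filter fun j : Fin n => (j : ℕ) < s) =
      (Finset.range s).attachFin
        (fun m hm => lt_of_lt_of_le (Finset.mem_range.mp hm) h) := by
    ext j
    simp [Finset.mem_attachFin]
  rw [he, Finset.card_attachFin, Finset.card_range]

/-!
A bigraph with parts of equal size `n ∈ {2k, 2k+1}`, encoded by
`N : Fin n → Finset (Fin n)`.  The equivalences `a b : Fin n ≃ Fin n` enumerate
the parts `A` and `B` in nondecreasing order of degree (0-indexed, so the paper's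
vertex `a_i` is `a ⟨i-1⟩`, and the bound `d(a_i) ≥ min{i-1, k}` becomes
`min i k ≤ deg (a i)`).  The degree of a `B`-vertex `y` is
`(Finset.univ.filter (fun x => y ∈ N x)).card`.
-/

theorem stmt8 (n k : ℕ) (hk : 1 ≤ k) (hn : n = 2 * k ∨ n = 2 * k + 1)
    (N : Fin n → Finset (Fin n))
    (a b : Fin n ≃ Fin n)
    (ha : ∀ i j : Fin n, i ≤ j → (N (a i)).card ≤ (N (a j)).card)
    (hb : ∀ i j : Fin n, i ≤ j →
      (Finset.univ.filter (fun x => b i ∈ N x)).card ≤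
        (Finset.univ.filter (fun x => b j ∈ N x)).card)
    (hda : ∀ i : Fin n, min (i : ℕ) k ≤ (N (a i)).card)
    (hdb : ∀ i : Fin n, min (i : ℕ) (n - k) ≤
      (Finset.univ.filter (fun x => b i ∈ N x)).card) :
    (∃ f : Fin n ≃ Fin n, ∀ x, f x ∈ N x) ∨
    (∃ m : ℕ, 1 ≤ m ∧ m ≤ k ∧
      (((Finset.univ.filter (fun j : Fin n => (j : ℕ) < m)).biUnion
        (fun j => N (a j))).card = m - 1)) ∨
    (∃ m : ℕ, 1 ≤ m ∧ m ≤ n - k ∧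
      (((Finset.univ.filter (fun j : Fin n => (j : ℕ) < m)).biUnion
        (fun j => Finset.univ.filter (fun x => b j ∈ N x))).card = m - 1)) := by
  classical
  by_cases hall : ∀ S : Finset (Fin n), S.card ≤ (S.biUnion N).card
  · left
    obtain ⟨f, hfinj, hf⟩ :=
      (Finset.all_card_le_biUnion_card_iff_existsInjective' N).mp hall
    exact ⟨Equiv.ofBijective f (Finite.injective_iff_bijective.mp hfinj), hf⟩
  · push_neg at hall
    obtain ⟨S₀, hS₀⟩ := hall
    obtain ⟨S, hSmem, hmin⟩ := Finset.exists_min_image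
      (Finset.univ.filter fun S : Finset (Fin n) => (S.biUnion N).card < S.card)
      Finset.card ⟨S₀, by simpa using hS₀⟩
    simp only [Finset.mem_filter, Finset.mem_univ, true_and] at hSmem hmin
    set s := S.card with hs
    have hs1 : 1 ≤ s := lt_of_le_of_lt (Nat.zero_le _) hSmem
    have hNS : (S.biUnion N).card = s - 1 := by
      obtain ⟨x, hx⟩ := Finset.card_pos.mp hs1
      have h1 : ¬ (((S.erase x).biUnion N).card < (S.erase x).card) := by
        intro h
        have h5 := hmin _ h
        have h4 := Finset.card_erase_of_mem hx
        omega
      push_neg at h1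
      have h2 : ((S.erase x).biUnion N) ⊆ S.biUnion N :=
        Finset.biUnion_subset_biUnion_of_subset_left _ (Finset.erase_subset _ _)
      have h3 := Finset.card_le_card h2
      have h4 := Finset.card_erase_of_mem hx
      omega
    have hsn : s ≤ n := by
      have := Finset.card_le_card (Finset.subset_univ S)
      simpa using this
    by_cases hsk : s ≤ k
    · right; left
      refine ⟨s, hs1, hsk, ?_⟩
      have hsub : S ⊆ (Finset.univ.filter fun j : Fin n => (j : ℕ) < s).image a := by
        intro x hx
        have hdeg : (N x).card ≤ s - 1 :=
          hNS ▸ Finset.card_le_card (Finset.subset_biUnion_of_mem N hx)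
        have hd := hda (a.symm x)
        rw [Equiv.apply_symm_apply] at hd
        have hlt : ((a.symm x : Fin n) : ℕ) < s := by
          by_contra h
          push_neg at h
          have : min s k ≤ min ((a.symm x : Fin n) : ℕ) k := min_le_min h le_rfl
          have hmk : min s k = s := min_eq_left hsk
          omega
        refine Finset.mem_image.mpr ⟨a.symm x, ?_, Equiv.apply_symm_apply a x⟩
        simp [hlt]
      have hcardT : ((Finset.univ.filter fun j : Fin n => (j : ℕ) < s).image a).card = s := by
        rw [Finset.card_image_of_injective _ a.injective, card_filter_lt_aux n s hsn]
      have hST : S = (Finset.univ.filter fun j : Fin n => (j : ℕ) < s).image a :=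
        Finset.eq_of_subset_of_card_le hsub (by rw [hcardT])
      rw [← Finset.image_biUnion, ← hST]
      exact hNS
    · push_neg at hsk
      right; right
      set t := n - s + 1 with ht
      have htnk : t ≤ n - k := by omega
      refine ⟨t, by omega, htnk, ?_⟩
      set T : Finset (Fin n) := Finset.univ \ (S.biUnion N) with hT
      have hTcard : T.card = t := by
        rw [hT, Finset.card_sdiff_of_subset (Finset.subset_univ _), hNS]
        simp only [Finset.card_univ, Fintype.card_fin]
        omega
      have hdisj : ∀ y ∈ T, (Finset.univ.filter fun x => y ∈ N x) ⊆ Finset.univ \ S := by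
        intro y hy x hx
        simp only [Finset.mem_filter, Finset.mem_univ, true_and] at hx
        simp only [Finset.mem_sdiff, Finset.mem_univ, true_and]
        intro hxS
        have : y ∈ S.biUnion N := Finset.mem_biUnion.mpr ⟨x, hxS, hx⟩
        rw [hT] at hy
        simp only [Finset.mem_sdiff, Finset.mem_univ, true_and] at hy
        exact hy this
      have hsubT : T ⊆ (Finset.univ.filter fun j : Fin n => (j : ℕ) < t).image b := by
        intro y hy
        have hdeg : (Finset.univ.filter fun x => y ∈ N x).card ≤ n - s := by
          have := Finset.card_le_card (hdisj y hy)
          rw [Finset.card_sdiff_of_subset (Finset.subset_univ _)] at this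
          simpa using this
        have hd := hdb (b.symm y)
        rw [Equiv.apply_symm_apply] at hd
        have hlt : ((b.symm y : Fin n) : ℕ) < t := by
          by_contra h
          push_neg at h
          have h2 : min t (n - k) ≤ min ((b.symm y : Fin n) : ℕ) (n - k) :=
            min_le_min h le_rfl
          have hmk : min t (n - k) = t := min_eq_left htnk
          omega
        refine Finset.mem_image.mpr ⟨b.symm y, ?_, Equiv.apply_symm_apply b y⟩
        simp [hlt]
      have htn : t ≤ n := by omega
      have hcardT : ((Finset.univ.filter fun j : Fin n => (j : ℕ) < t).image b).card = t := by
        rw [Finset.card_image_of_injective _ b.injective, card_filter_lt_aux n t htn]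
      have hTeq : T = (Finset.univ.filter fun j : Fin n => (j : ℕ) < t).image b :=
        Finset.eq_of_subset_of_card_le hsubT (by rw [hcardT, hTcard])
      have hUeq : ((Finset.univ.filter fun j : Fin n => (j : ℕ) < t).biUnion
          (fun j => Finset.univ.filter fun x => b j ∈ N x)) =
          T.biUnion (fun y => Finset.univ.filter fun x => y ∈ N x) := by
        rw [hTeq, Finset.image_biUnion]
        
      rw [hUeq]
      have hle : (T.biUnion (fun y => Finset.univ.filter fun x => y ∈ N x)).card ≤ t - 1 := by
        have hsub2 : T.biUnion (fun y => Finset.univ.filter fun x => y ∈ N x) ⊆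
            Finset.univ \ S := Finset.biUnion_subset.mpr hdisj
        have := Finset.card_le_card hsub2
        rw [Finset.card_sdiff_of_subset (Finset.subset_univ _)] at this
        simp only [Finset.card_univ, Fintype.card_fin] at this
        omega
      have hge : t - 1 ≤ (T.biUnion (fun y => Finset.univ.filter fun x => y ∈ N x)).card := by
        have ht1 : t - 1 < n := by omega
        set y0 : Fin n := b ⟨t - 1, ht1⟩ with hy0
        have hy0T : y0 ∈ T := by
          rw [hTeq]
          refine Finset.mem_image.mpr ⟨⟨t - 1, ht1⟩, ?_, rfl⟩
          simp only [Finset.mem_filter, Finset.mem_univ, true_and]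
          omega
        have hsub3 : (Finset.univ.filter fun x => y0 ∈ N x) ⊆
            T.biUnion (fun y => Finset.univ.filter fun x => y ∈ N x) :=
          Finset.subset_biUnion_of_mem (fun y => Finset.univ.filter fun x => y ∈ N x) hy0T
        have hd := hdb ⟨t - 1, ht1⟩
        have : min (t - 1) (n - k) = t - 1 := min_eq_left (by omega)
        have := Finset.card_le_card hsub3
        simp only [hy0] at *
        omega
      omega
  done
end

section
/- Let H be a bipartite graph with parts A, B of size 8 each, with vertices a₁,…,a₈ of A and b₁,…,b₈ of B listed in nondecreasing degree order. Suppose d(a₁) ≥ 1, d(a₂) ≥ 2, d(a₃) ≥ 3, d(a₄) ≥ 3, d(a_i) ≥ 4 for i ∈ {5,6,7,8}, and the analogous bounds hold for the b_i. Then H has a perfect matching unless |N({a₁,a₂,a₃,a₄})| = 3 or |N({b₁,b₂,b₃,b₄})| = 3. -/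
/-!
A bigraph with parts of size 8 encoded by `N : Fin 8 → Finset (Fin 8)`, with
`a b : Fin 8 ≃ Fin 8` enumerating the parts in nondecreasing order of degree
(0-indexed: the paper's `a_1, …, a_8` are `a 0, …, a 7`).  Under the stated
degree bounds, `H` has a perfect matching unless `|N({a₁,…,a₄})| = 3` or
`|N({b₁,…,b₄})| = 3`.
-/

theorem stmt10 (N : Fin 8 → Finset (Fin 8))
    (a b : Fin 8 ≃ Fin 8)
    (ha : ∀ i j : Fin 8, i ≤ j → (N (a i)).card ≤ (N (a j)).card)
    (hb : ∀ i j : Fin 8, i ≤ j →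
      (Finset.univ.filter (fun x => b i ∈ N x)).card ≤
        (Finset.univ.filter (fun x => b j ∈ N x)).card)
    (hda0 : 1 ≤ (N (a 0)).card) (hda1 : 2 ≤ (N (a 1)).card)
    (hda2 : 3 ≤ (N (a 2)).card) (hda3 : 3 ≤ (N (a 3)).card)
    (hda4 : ∀ i : Fin 8, 4 ≤ (i : ℕ) → 4 ≤ (N (a i)).card)
    (hdb0 : 1 ≤ (Finset.univ.filter (fun x => b 0 ∈ N x)).card)
    (hdb1 : 2 ≤ (Finset.univ.filter (fun x => b 1 ∈ N x)).card)
    (hdb2 : 3 ≤ (Finset.univ.filter (fun x => b 2 ∈ N x)).card)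
    (hdb3 : 3 ≤ (Finset.univ.filter (fun x => b 3 ∈ N x)).card)
    (hdb4 : ∀ i : Fin 8, 4 ≤ (i : ℕ) →
      4 ≤ (Finset.univ.filter (fun x => b i ∈ N x)).card) :
    (∃ f : Fin 8 ≃ Fin 8, ∀ x, f x ∈ N x) ∨
    (({a 0, a 1, a 2, a 3} : Finset (Fin 8)).biUnion N).card = 3 ∨
    (({b 0, b 1, b 2, b 3} : Finset (Fin 8)).biUnion
      (fun y => Finset.univ.filter (fun x => y ∈ N x))).card = 3 := by
  classical
  set M : Fin 8 → Finset (Fin 8) := fun y => Finset.univ.filter (fun x => y ∈ N x) with hM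
  by_cases hHall : ∀ S : Finset (Fin 8), S.card ≤ (S.biUnion N).card
  · left
    obtain ⟨f, hfinj, hf⟩ :=
      (Finset.all_card_le_biUnion_card_iff_existsInjective' N).mp hHall
    exact ⟨Equiv.ofBijective f (Finite.injective_iff_bijective.mp hfinj), hf⟩
  push_neg at hHall
  obtain ⟨S, hS⟩ := hHall
  -- generic helpers
  have exIdx : ∀ (e : Fin 8 ≃ Fin 8) (T : Finset (Fin 8)), T.Nonempty →
      ∃ x ∈ T, T.card ≤ (e.symm x : ℕ) + 1 := by
    intro e T hT
    obtain ⟨x, hxT, hmax⟩ := T.exists_max_image (fun z => ((e.symm z : Fin 8) : ℕ)) hT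
    refine ⟨x, hxT, ?_⟩
    have hinj : Set.InjOn (fun z => ((e.symm z : Fin 8) : ℕ)) T := by
      intro u _ v _ huv
      exact e.symm.injective (Fin.val_injective huv)
    have himg : T.image (fun z => ((e.symm z : Fin 8) : ℕ)) ⊆
        Finset.range ((e.symm x : ℕ) + 1) := by
      intro m hm
      simp only [Finset.mem_image] at hm
      obtain ⟨z, hz, rfl⟩ := hm
      exact Finset.mem_range.mpr (Nat.lt_succ_of_le (hmax z hz))
    calc T.card = (T.image (fun z => ((e.symm z : Fin 8) : ℕ))).card :=
          (Finset.card_image_of_injOn hinj).symm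
      _ ≤ (Finset.range ((e.symm x : ℕ) + 1)).card := Finset.card_le_card himg
      _ = (e.symm x : ℕ) + 1 := Finset.card_range _
  have cardIdx : ∀ (e : Fin 8 ≃ Fin 8) (T : Finset (Fin 8)) (t : ℕ),
      (∀ y ∈ T, (e.symm y : ℕ) ≤ t) → T.card ≤ t + 1 := by
    intro e T t hT
    have hinj : Set.InjOn (fun z => ((e.symm z : Fin 8) : ℕ)) T := by
      intro u _ v _ huv
      exact e.symm.injective (Fin.val_injective huv)
    have himg : T.image (fun z => ((e.symm z : Fin 8) : ℕ)) ⊆ Finset.range (t + 1) := by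
      intro m hm
      simp only [Finset.mem_image] at hm
      obtain ⟨z, hz, rfl⟩ := hm
      exact Finset.mem_range.mpr (Nat.lt_succ_of_le (hT z hz))
    calc T.card = (T.image (fun z => ((e.symm z : Fin 8) : ℕ))).card :=
          (Finset.card_image_of_injOn hinj).symm
      _ ≤ _ := Finset.card_le_card himg
      _ = t + 1 := Finset.card_range _
  have mem4 : ∀ (e : Fin 8 ≃ Fin 8) (y : Fin 8), (e.symm y : ℕ) ≤ 3 →
      y ∈ ({e 0, e 1, e 2, e 3} : Finset (Fin 8)) := by
    intro e y h
    have hy : y = e (e.symm y) := (e.apply_symm_apply y).symm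
    have hv : (e.symm y : ℕ) = 0 ∨ (e.symm y : ℕ) = 1 ∨ (e.symm y : ℕ) = 2 ∨
        (e.symm y : ℕ) = 3 := by omega
    simp only [Finset.mem_insert, Finset.mem_singleton]
    rcases hv with h0 | h1 | h2 | h3
    · exact Or.inl (by rw [hy]; congr 1; exact Fin.ext (by simpa using h0))
    · exact Or.inr (Or.inl (by rw [hy]; congr 1; exact Fin.ext (by simpa using h1)))
    · exact Or.inr (Or.inr (Or.inl (by rw [hy]; congr 1; exact Fin.ext (by simpa using h2))))
    · exact Or.inr (Or.inr (Or.inr (by rw [hy]; congr 1; exact Fin.ext (by simpa using h3))))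
  have card4 : ∀ (e : Fin 8 ≃ Fin 8),
      ({e 0, e 1, e 2, e 3} : Finset (Fin 8)).card = 4 := by
    intro e
    rw [Finset.card_insert_of_notMem, Finset.card_insert_of_notMem,
      Finset.card_insert_of_notMem, Finset.card_singleton] <;>
      simp [e.injective.eq_iff] <;> decide
  -- A-side degree facts
  have hA1 : ∀ x : Fin 8, 1 ≤ (N x).card := by
    intro x
    have h := ha 0 (a.symm x) (Fin.zero_le _)
    rw [a.apply_symm_apply] at h
    omega
  have hA2 : ∀ x : Fin 8, 1 ≤ (a.symm x : ℕ) → 2 ≤ (N x).card := by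
    intro x hx
    have h := ha 1 (a.symm x) (by rw [Fin.le_def]; simpa using hx)
    rw [a.apply_symm_apply] at h
    omega
  have hA3 : ∀ x : Fin 8, 2 ≤ (a.symm x : ℕ) → 3 ≤ (N x).card := by
    intro x hx
    have h := ha 2 (a.symm x) (by rw [Fin.le_def]; simpa using hx)
    rw [a.apply_symm_apply] at h
    omega
  have hA4 : ∀ x : Fin 8, 4 ≤ (a.symm x : ℕ) → 4 ≤ (N x).card := by
    intro x hx
    have h := hda4 (a.symm x) hx
    rwa [a.apply_symm_apply] at h
  -- B-side degree facts
  have hB1 : ∀ y : Fin 8, 1 ≤ (M y).card := by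
    intro y
    have h := hb 0 (b.symm y) (Fin.zero_le _)
    rw [b.apply_symm_apply] at h
    simpa [hM] using le_trans hdb0 h
  have hB2 : ∀ y : Fin 8, 1 ≤ (b.symm y : ℕ) → 2 ≤ (M y).card := by
    intro y hy
    have h := hb 1 (b.symm y) (by rw [Fin.le_def]; simpa using hy)
    rw [b.apply_symm_apply] at h
    simpa [hM] using le_trans hdb1 h
  have hB3 : ∀ y : Fin 8, 2 ≤ (b.symm y : ℕ) → 3 ≤ (M y).card := by
    intro y hy
    have h := hb 2 (b.symm y) (by rw [Fin.le_def]; simpa using hy)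
    rw [b.apply_symm_apply] at h
    simpa [hM] using le_trans hdb2 h
  have hB4 : ∀ y : Fin 8, 4 ≤ (b.symm y : ℕ) → 4 ≤ (M y).card := by
    intro y hy
    have h := hdb4 (b.symm y) hy
    rw [b.apply_symm_apply] at h
    simpa [hM] using h
  -- set up the violating set
  have hSne : S.Nonempty := by
    rcases Finset.eq_empty_or_nonempty S with rfl | h
    · simp at hS
    · exact h
  have hk8 : S.card ≤ 8 := by
    have := Finset.card_le_card (Finset.subset_univ S)
    simpa using this
  have memdeg : ∀ x ∈ S, (N x).card ≤ (S.biUnion N).card := fun x hx =>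
    Finset.card_le_card (Finset.subset_biUnion_of_mem N hx)
  obtain ⟨x0, hx0S, hx0i⟩ := exIdx a S hSne
  by_cases hk5 : 5 ≤ S.card
  · -- large violating set: pass to the B side
    have hn4 : 4 ≤ (S.biUnion N).card :=
      le_trans (hA4 x0 (by omega)) (memdeg x0 hx0S)
    set B' : Finset (Fin 8) := Finset.univ \ S.biUnion N with hB'
    have hB'card : B'.card = 8 - (S.biUnion N).card := by
      rw [hB', Finset.card_sdiff_of_subset (Finset.subset_univ _)]
      simp
    have hNB'sub : B'.biUnion M ⊆ Finset.univ \ S := by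
      intro x hx
      simp only [Finset.mem_biUnion] at hx
      obtain ⟨y, hyB', hyx⟩ := hx
      simp only [hM, Finset.mem_filter, Finset.mem_univ, true_and] at hyx
      simp only [Finset.mem_sdiff, Finset.mem_univ, true_and]
      intro hxS
      have : y ∈ S.biUnion N := Finset.mem_biUnion.mpr ⟨x, hxS, hyx⟩
      rw [hB'] at hyB'
      simp only [Finset.mem_sdiff] at hyB'
      exact hyB'.2 this
    have hNB'card : (B'.biUnion M).card ≤ 8 - S.card := by
      have h1 := Finset.card_le_card hNB'sub
      have h2 : (Finset.univ \ S).card = 8 - S.card := by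
        rw [Finset.card_sdiff_of_subset (Finset.subset_univ _)]
        simp
      omega
    have memdegB : ∀ y ∈ B', (M y).card ≤ 8 - S.card := fun y hy =>
      le_trans (Finset.card_le_card (Finset.subset_biUnion_of_mem M hy)) hNB'card
    have hn7 : (S.biUnion N).card ≤ 7 := by omega
    have hB'ne : B'.Nonempty := by
      rw [← Finset.card_pos, hB'card]; omega
    -- S.card = 8 is impossible
    have hk8' : S.card ≤ 7 := by
      by_contra hc
      obtain ⟨y, hy⟩ := hB'ne
      have := memdegB y hy
      have := hB1 y
      omega
    -- S.card = 7 is impossible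
    have hk7 : S.card ≤ 6 := by
      by_contra hc
      have hidx : ∀ y ∈ B', (b.symm y : ℕ) ≤ 0 := by
        intro y hy
        by_contra hcc
        have := hB2 y (by omega)
        have := memdegB y hy
        omega
      have := cardIdx b B' 0 hidx
      omega
    -- S.card = 6 is impossible
    have hk6 : S.card ≤ 5 := by
      by_contra hc
      have hidx : ∀ y ∈ B', (b.symm y : ℕ) ≤ 1 := by
        intro y hy
        by_contra hcc
        have := hB3 y (by omega)
        have := memdegB y hy
        omega
      have := cardIdx b B' 1 hidx
      omega
    -- so S.card = 5, (S.biUnion N).card = 4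
    have hkeq : S.card = 5 := by omega
    have hneq : (S.biUnion N).card = 4 := by omega
    have hidx : ∀ y ∈ B', (b.symm y : ℕ) ≤ 3 := by
      intro y hy
      by_contra hcc
      have := hB4 y (by omega)
      have := memdegB y hy
      omega
    have hB'sub : B' ⊆ ({b 0, b 1, b 2, b 3} : Finset (Fin 8)) := fun y hy =>
      mem4 b y (hidx y hy)
    have hB'eq : B' = ({b 0, b 1, b 2, b 3} : Finset (Fin 8)) := by
      apply Finset.eq_of_subset_of_card_le hB'sub
      rw [card4 b, hB'card, hneq]
    right; right
    have hb3 : b 3 ∈ B' := by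
      rw [hB'eq]
      simp
    have hlow : 3 ≤ (B'.biUnion M).card := by
      refine le_trans ?_ (Finset.card_le_card (Finset.subset_biUnion_of_mem M hb3))
      exact hB3 (b 3) (by rw [Equiv.symm_apply_apply]; decide)
    have : (B'.biUnion M).card = 3 := by omega
    rw [← hB'eq]
    exact this
  · -- small violating set: S must be {a 0, a 1, a 2, a 3}
    push_neg at hk5
    have hn1 : 1 ≤ (S.biUnion N).card := le_trans (hA1 x0) (memdeg x0 hx0S)
    have hk2 : 2 ≤ S.card := by omega
    have hn2 : 2 ≤ (S.biUnion N).card :=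
      le_trans (hA2 x0 (by omega)) (memdeg x0 hx0S)
    have hk3 : 3 ≤ S.card := by omega
    have hn3 : 3 ≤ (S.biUnion N).card :=
      le_trans (hA3 x0 (by omega)) (memdeg x0 hx0S)
    have hkeq : S.card = 4 := by omega
    have hneq : (S.biUnion N).card = 3 := by omega
    have hidx : ∀ x ∈ S, (a.symm x : ℕ) ≤ 3 := by
      intro x hx
      by_contra hcc
      have := hA4 x (by omega)
      have := memdeg x hx
      omega
    have hSsub : S ⊆ ({a 0, a 1, a 2, a 3} : Finset (Fin 8)) := fun x hx =>
      mem4 a x (hidx x hx)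
    have hSeq : S = ({a 0, a 1, a 2, a 3} : Finset (Fin 8)) := by
      apply Finset.eq_of_subset_of_card_le hSsub
      rw [card4 a, hkeq]
    right; left
    rw [← hSeq]
    exact hneq
end

section
/- Let H be a bipartite graph with parts A, B of size 8 and minimum degree at least 3. If M is a perfect matching of H, then there exists a subset M' ⊆ M with |M'| ≥ 6 such that for every edge e ∈ M', the graph H − e contains a perfect matching. -/
/-!
Orient the matching: `x → y` when `x` is adjacent to the partner `f y` of `y ≠ x`. If `t` lies
on a directed cycle, Hall's theorem yields a perfect matching of `H - (t, f t)`. All in- and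
out-degrees of this digraph are at least `2`, so every vertex has at least `3` descendants and
`3` ancestors. For a vertex `t` on no cycle these are disjoint, so on `8` vertices `t` is
comparable with all but at most one other vertex, and two acyclic vertices below (or above) `t`
would give it `5` ancestors (descendants). Three acyclic vertices cannot satisfy both constraints.
-/

open Finset Relation Function

section Digraph

open Classical

variable {V : Type*} [Fintype V] {r : V → V → Prop}

noncomputable def descendants (r : V → V → Prop) (t : V) : Finset V := {y | TransGen r t y}

theorem mem_descendants {t y : V} : y ∈ descendants r t ↔ TransGen r t y := by
  simp [descendants]

theorem mem_descendants_swap {t x : V} : x ∈ descendants (swap r) t ↔ TransGen r x t := by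
  rw [mem_descendants, transGen_swap]

theorem le_card_descendants {k : ℕ} (hirr : ∀ x, ¬r x x) (hk : 1 ≤ k)
    (hout : ∀ x, k ≤ #{y | r x y}) (t : V) : k + 1 ≤ #(descendants r t) := by
  obtain ⟨b, hb⟩ : ∃ b, r t b := by
    obtain ⟨b, hb⟩ := card_pos.1 (Nat.lt_of_lt_of_le hk (hout t))
    exact ⟨b, (mem_filter.1 hb).2⟩
  have hsub : insert b ({y | r b y} : Finset V) ⊆ descendants r t := by
    intro y hy
    rcases mem_insert.1 hy with rfl | hy
    · exact mem_descendants.2 (.single hb)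
    · exact mem_descendants.2 ((TransGen.single hb).tail (mem_filter.1 hy).2)
  have hcard := card_le_card hsub
  rw [card_insert_of_notMem (by simpa using hirr b)] at hcard
  linarith [hout b]

theorem card_descendants_add_card_le {t : V} (ht : ¬TransGen r t t) {s : Finset V}
    (hs : ∀ x ∈ s, ¬TransGen r t x ∧ ¬TransGen r x t) :
    #(descendants r t) + #(descendants (swap r) t) + #s ≤ Fintype.card V := by
  have hFP : Disjoint (descendants r t) (descendants (swap r) t) :=
    disjoint_left.2 fun x htx hxt =>
      ht ((mem_descendants.1 htx).trans (mem_descendants_swap.1 hxt))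
  have hFPs : Disjoint (descendants r t ∪ descendants (swap r) t) s := by
    refine disjoint_left.2 fun x hx hxs => ?_
    rcases mem_union.1 hx with hx | hx
    · exact (hs x hxs).1 (mem_descendants.1 hx)
    · exact (hs x hxs).2 (mem_descendants_swap.1 hx)
  rw [← card_union_of_disjoint hFP, ← card_union_of_disjoint hFPs]
  exact card_le_univ _

structure IsLooplessMinDegree (r : V → V → Prop) (k : ℕ) : Prop where
  irrefl : ∀ x, ¬r x x
  le_card_out : ∀ x, k ≤ #{y | r x y}
  le_card_in : ∀ y, k ≤ #{x | r x y}

theorem IsLooplessMinDegree.swap {k : ℕ} (h : IsLooplessMinDegree r k) :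
    IsLooplessMinDegree (swap r) k :=
  ⟨h.irrefl, h.le_card_in, h.le_card_out⟩

variable {k : ℕ}

theorem transGen_of_transGen_of_transGen (h : IsLooplessMinDegree r k) (hk : 1 ≤ k)
    (hV : Fintype.card V ≤ 2 * k + 4) {t a u : V} (ht : ¬TransGen r t t)
    (ha : ¬TransGen r a a) (hat : TransGen r a t) (hut : TransGen r u t) (hua : u ≠ a) :
    TransGen r u a := by
  by_contra hnua
  have hsub : insert a (insert u (descendants (swap r) a)) ⊆ descendants (swap r) t := by
    intro x hx
    rw [mem_descendants_swap]
    rcases mem_insert.1 hx with rfl | hx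
    · exact hat
    rcases mem_insert.1 hx with rfl | hx
    · exact hut
    · exact (mem_descendants_swap.1 hx).trans hat
  have hcard := card_le_card hsub
  rw [card_insert_of_notMem, card_insert_of_notMem (mt mem_descendants_swap.1 hnua)] at hcard
  · have := le_card_descendants h.swap.irrefl hk h.swap.le_card_out a
    have := le_card_descendants h.irrefl hk h.le_card_out t
    have := card_descendants_add_card_le ht (s := {t}) (by simpa using ht)
    simp only [card_singleton] at this
    omega
  · rw [mem_insert, mem_descendants_swap]
    exact fun h => h.elim (fun h => hua h.symm) ha

theorem eq_of_transGen_of_transGen (h : IsLooplessMinDegree r k) (hk : 1 ≤ k)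
    (hV : Fintype.card V ≤ 2 * k + 4) {t a u : V} (ht : ¬TransGen r t t)
    (ha : ¬TransGen r a a) (hu : ¬TransGen r u u) (hat : TransGen r a t)
    (hut : TransGen r u t) : a = u := by
  by_contra hne
  exact ha ((transGen_of_transGen_of_transGen h hk hV ht hu hut hat hne).trans
    (transGen_of_transGen_of_transGen h hk hV ht ha hat hut (Ne.symm hne)))

theorem transGen_or_transGen_of_ne (h : IsLooplessMinDegree r k) (hk : 1 ≤ k)
    (hV : Fintype.card V ≤ 2 * k + 4) {t u v : V} (ht : ¬TransGen r t t) (hut : u ≠ t)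
    (hvt : v ≠ t) (huv : u ≠ v) :
    (TransGen r t u ∨ TransGen r u t) ∨ (TransGen r t v ∨ TransGen r v t) := by
  by_contra! hcon
  have := card_descendants_add_card_le ht (s := {t, u, v}) (by simp_all)
  rw [card_insert_of_notMem (by simp [hut.symm, hvt.symm]),
    card_insert_of_notMem (by simp [huv]), card_singleton] at this
  have := le_card_descendants h.swap.irrefl hk h.swap.le_card_out t
  have := le_card_descendants h.irrefl hk h.le_card_out t
  omega

theorem card_filter_not_transGen_self_le_two (h : IsLooplessMinDegree r k) (hk : 1 ≤ k)
    (hV : Fintype.card V ≤ 2 * k + 4) : #{t | ¬TransGen r t t} ≤ 2 := by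
  have below : ∀ {t a u : V}, ¬TransGen r t t → ¬TransGen r a a → ¬TransGen r u u →
      TransGen r a t → TransGen r u t → a = u :=
    eq_of_transGen_of_transGen h hk hV
  have above : ∀ {t a u : V}, ¬TransGen r t t → ¬TransGen r a a → ¬TransGen r u u →
      TransGen r t a → TransGen r t u → a = u :=
    fun ht ha hu hta htu => eq_of_transGen_of_transGen h.swap hk hV (mt transGen_swap.1 ht)
      (mt transGen_swap.1 ha) (mt transGen_swap.1 hu) (transGen_swap.2 hta) (transGen_swap.2 htu)
  have key : ∀ x y z, ¬TransGen r x x → ¬TransGen r y y → ¬TransGen r z z →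
      x ≠ y → z ≠ x → z ≠ y → TransGen r x y → False := by
    intro x y z hx hy hz hxy hzx hzy hr
    rcases transGen_or_transGen_of_ne h hk hV hz hzx.symm hzy.symm hxy with
      (hzx' | hxz) | (hzy' | hyz)
    · exact hzx (below hy hz hx (hzx'.trans hr) hr)
    · exact hzy (above hx hy hz hr hxz).symm
    · exact hzx (below hy hx hz hr hzy').symm
    · exact hxy (below hz hx hy (hr.trans hyz) hyz)
  by_contra! hcard
  obtain ⟨a, ha, b, hb, c, hc, hab, hac, hbc⟩ := two_lt_card.1 hcard
  simp only [mem_filter, mem_univ, true_and] at ha hb hc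
  rcases transGen_or_transGen_of_ne h hk hV ha hab.symm hac.symm hbc with (hr | hr) | (hr | hr)
  · exact key a b c ha hb hc hab hac.symm hbc.symm hr
  · exact key b a c hb ha hc hab.symm hbc.symm hac.symm hr
  · exact key a c b ha hc hb hac hab.symm hbc hr
  · exact key c a b hc ha hb hac.symm hbc hab.symm hr

end Digraph

section Matching

variable {α β : Type*}

-- A directed cycle through `t` is an `f`-alternating cycle through the edge `(t, f t)`.
def exchangeRel (N : α → Finset β) (f : α ≃ β) (x y : α) : Prop := y ≠ x ∧ f y ∈ N x

variable [DecidableEq β]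

open Classical in
theorem card_filter_exchangeRel [Fintype α] {N : α → Finset β} {f : α ≃ β}
    (hf : ∀ x, f x ∈ N x) (x : α) :
    #{y | exchangeRel N f x y} = #(N x) - 1 := by
  rw [← card_erase_of_mem (hf x), ← card_map f.toEmbedding]
  congr 1
  ext b
  obtain ⟨y, rfl⟩ := f.surjective b
  simp only [mem_map_equiv, mem_filter, mem_univ, true_and, mem_erase, Equiv.symm_apply_apply]
  simp [exchangeRel, f.injective.eq_iff]

open Classical in
theorem card_filter_exchangeRel_swap [Fintype α] {N : α → Finset β} {f : α ≃ β}
    (hf : ∀ x, f x ∈ N x) (y : α) :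
    #{x | exchangeRel N f x y} = #{x | f y ∈ N x} - 1 := by
  rw [← card_erase_of_mem (mem_filter.2 ⟨mem_univ y, hf y⟩)]
  congr 1
  ext x
  simp only [mem_filter, mem_univ, true_and, mem_erase]
  simp [exchangeRel, eq_comm]

variable [DecidableEq α]

theorem card_le_card_biUnion_erase_of_transGen {N : α → Finset β} {f : α ≃ β}
    (hf : ∀ x, f x ∈ N x) {t : α} (ht : TransGen (exchangeRel N f) t t) (s : Finset α) :
    #s ≤ #(s.biUnion fun z => if z = t then (N t).erase (f t) else N z) := by
  set T := s.biUnion fun z => if z = t then (N t).erase (f t) else N z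
  have mem_T : ∀ z ∈ s, z ≠ t → f z ∈ T := fun z hz hzt =>
    mem_biUnion.2 ⟨z, hz, by simpa [hzt] using hf z⟩
  -- A Hall violator containing `t` would make `s \ {t}` closed under exchange steps from `t`.
  by_contra! hlt
  by_cases hts : t ∈ s
  · have hT : T = (s.erase t).image f := by
      refine (eq_of_subset_of_card_le (fun y hy => ?_) ?_).symm
      · obtain ⟨z, hz, rfl⟩ := mem_image.1 hy
        exact mem_T z (mem_of_mem_erase hz) (ne_of_mem_erase hz)
      · rw [card_image_of_injective _ f.injective, card_erase_of_mem hts]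
        omega
    have closed : ∀ y, TransGen (exchangeRel N f) t y → y ∈ s.erase t := by
      intro y hy
      rw [← f.injective.mem_finset_image, ← hT]
      induction hy with
      | single hty =>
        exact mem_biUnion.2 ⟨t, hts, by simpa [hty.1, f.injective.ne hty.1] using hty.2⟩
      | tail _ hyz ih =>
        rw [hT, f.injective.mem_finset_image] at ih
        exact mem_biUnion.2 ⟨_, mem_of_mem_erase ih, by simpa [ne_of_mem_erase ih] using hyz.2⟩
    exact notMem_erase t s (closed t ht)
  · have := card_le_card (show s.image f ⊆ T from fun y hy => by
      obtain ⟨z, hz, rfl⟩ := mem_image.1 hy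
      exact mem_T z hz (ne_of_mem_of_not_mem hz hts))
    rw [card_image_of_injective _ f.injective] at this
    omega

theorem exists_equiv_ne_of_transGen [Finite α] {N : α → Finset β} {f : α ≃ β}
    (hf : ∀ x, f x ∈ N x) {t : α} (ht : TransGen (exchangeRel N f) t t) :
    ∃ g : α ≃ β, (∀ z, g z ∈ N z) ∧ g t ≠ f t := by
  obtain ⟨g, hg, hgN⟩ := (all_card_le_biUnion_card_iff_exists_injective _).1
    (card_le_card_biUnion_erase_of_transGen hf ht)
  have hbij : Bijective (f.symm ∘ g) :=
    Finite.injective_iff_bijective.1 (f.symm.injective.comp hg)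
  refine ⟨(Equiv.ofBijective _ hbij).trans f, fun z => ?_, ?_⟩
  · have := hgN z
    simp only [Equiv.trans_apply, Equiv.ofBijective_apply, comp_apply, Equiv.apply_symm_apply]
    split_ifs at this with hz
    · subst hz
      exact mem_of_mem_erase this
    · exact this
  · have := hgN t
    simp only [Equiv.trans_apply, Equiv.ofBijective_apply, comp_apply, Equiv.apply_symm_apply]
    rw [if_pos rfl] at this
    exact ne_of_mem_erase this

end Matching

theorem stmt11 (N : Fin 8 → Finset (Fin 8))
    (hA : ∀ x, 3 ≤ (N x).card)
    (hB : ∀ y : Fin 8, 3 ≤ (Finset.univ.filter (fun x => y ∈ N x)).card)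
    (f : Fin 8 ≃ Fin 8) (hf : ∀ x, f x ∈ N x) :
    ∃ S : Finset (Fin 8), 6 ≤ S.card ∧
      ∀ x ∈ S, ∃ g : Fin 8 ≃ Fin 8, (∀ z, g z ∈ N z) ∧ g x ≠ f x := by
  classical
  have hdeg : IsLooplessMinDegree (exchangeRel N f) 2 := by
    refine ⟨fun x h => h.1 rfl, fun x => ?_, fun y => ?_⟩
    · rw [card_filter_exchangeRel hf]; have := hA x; omega
    · rw [card_filter_exchangeRel_swap hf]; have := hB (f y); omega
  have hbad := card_filter_not_transGen_self_le_two hdeg one_le_two (by simp)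
  refine ⟨univ.filter fun x => TransGen (exchangeRel N f) x x, ?_, fun x hx =>
    exists_equiv_ne_of_transGen hf (mem_filter.1 hx).2⟩
  have := card_filter_add_card_filter_not (s := univ) fun x => TransGen (exchangeRel N f) x x
  simp only [card_univ, Fintype.card_fin] at this
  omega
end

section
/- Fix an integer k ≥ 4. Let H be a bipartite graph with parts A, B of size 2k and minimum degree at least k−1, and suppose there exist X ⊆ A and a set Ẽ of at most one edge of H such that |X| − |N_{H−Ẽ}(X)| = 2 (so necessarily |X| = k+1 and |N_{H−Ẽ}(X)| = k−1). Let H' be another bipartite graph on the same parts with minimum degree at least k−1, formed from H by adding two matchings and removing two matchings. If H' contains a matching of size 2 from X to B \ N_{H−Ẽ}(X), then H' has a perfect matching. -/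
/-- A set of pairs (edges of `K_{n,n}`, with first coordinate in part `A` and
second in part `B`) is a matching if no two of its edges share an endpoint. -/
def IsMatchingSet {n : ℕ} (M : Finset (Fin n × Fin n)) : Prop :=
  ∀ p ∈ M, ∀ q ∈ M, (p.1 = q.1 ∨ p.2 = q.2) → p = q

/-- The edge set of the bigraph encoded by the neighborhood function `N`. -/
def edgeFinset' {n : ℕ} (N : Fin n → Finset (Fin n)) : Finset (Fin n × Fin n) :=
  Finset.univ.filter (fun p => p.2 ∈ N p.1)

/-- The neighborhood of `X ⊆ A` in the graph `N` with the edges of `E` deleted. -/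
def nbhdMinus {n : ℕ} (N : Fin n → Finset (Fin n))
    (E : Finset (Fin n × Fin n)) (X : Finset (Fin n)) : Finset (Fin n) :=
  X.biUnion (fun x => (N x).filter (fun y => (x, y) ∉ E))

/-!
By Hall's theorem, a `(2k, k - 1)`-bigraph without a perfect matching contains an empty biclique
with `k + 1` vertices on one side and `k` on the other. The hypotheses are symmetric under
exchanging the two parts (with `X, Y` replaced by `B \ Y, A \ X`), so it suffices to rule out an
empty biclique `P × Q` in `H'` with `P ⊆ A`, `|P| = k + 1`, `|Q| = k`.

Minimum degree `k - 1` forces `H'` to be complete between `A \ P` and `Q`, and every vertex of `X`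
other than the end of the deleted edge to have `H`-neighbourhood exactly `Y`. Hence many edges
between these sets must have been added or removed; as at most two were added and two removed at
each vertex, counting them excludes everything except `P = X` and `Q ∩ Y = ∅`. Then `Q ∪ Y` misses
a single vertex of `B`, which cannot absorb the matching of size two from `X` to `B \ Y`.
-/

open Finset Fintype

variable {α β : Type*} [Fintype α] [Fintype β]

open Classical in
def MinDegreeAtLeast (H : α → β → Prop) (d : ℕ) : Prop :=
  (∀ x, d ≤ #{y | H x y}) ∧ ∀ y, d ≤ #{x | H x y}

open Classical in
def MaxDegreeAtMost (R : α → β → Prop) (d : ℕ) : Prop :=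
  (∀ x, #{y | R x y} ≤ d) ∧ ∀ y, #{x | R x y} ≤ d

def HasEmptyBiclique (H : α → β → Prop) (p q : ℕ) : Prop :=
  ∃ (P : Finset α) (Q : Finset β), #P = p ∧ #Q = q ∧ ∀ x ∈ P, ∀ y ∈ Q, ¬H x y

/-- `N_{H - ab}(X) ⊆ Y`. -/
def NbhdDeleteEdgeSubset (H : α → β → Prop) (a : α) (b : β) (X : Finset α) (Y : Finset β) :
    Prop :=
  ∀ x y, H x y → x ∈ X → y ∉ Y → x = a ∧ y = b

variable {H R S : α → β → Prop} {d e : ℕ}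

namespace MinDegreeAtLeast

theorem flip (h : MinDegreeAtLeast H d) : MinDegreeAtLeast (flip H) d := ⟨h.2, h.1⟩

theorem le_card (h : MinDegreeAtLeast H d) {x : α} {s : Finset β} (hs : ∀ y, H x y → y ∈ s) :
    d ≤ #s := by
  classical
  exact (h.1 x).trans (card_le_card fun y hy => hs y (mem_filter.1 hy).2)

theorem adj_of_mem (h : MinDegreeAtLeast H d) {x : α} {s : Finset β}
    (hs : ∀ y, H x y → y ∈ s) (hsd : #s ≤ d) {y : β} (hy : y ∈ s) : H x y := by
  classical
  have hnbhd : ({y | H x y} : Finset β) = s :=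
    eq_of_subset_of_card_le (fun y hy => hs y (mem_filter.1 hy).2) (hsd.trans (h.1 x))
  rw [← hnbhd] at hy
  exact (mem_filter.1 hy).2

theorem le_of_maxDegreeAtMost (h : MinDegreeAtLeast H d) (hR : MaxDegreeAtMost R e) {x : α}
    (hHR : ∀ y, H x y → R x y) : d ≤ e := by
  classical
  exact (h.1 x).trans ((card_le_card fun y hy => mem_filter.2 ⟨mem_univ y,
    hHR y (mem_filter.1 hy).2⟩).trans (hR.1 x))

end MinDegreeAtLeast

theorem minDegreeAtLeast_mem [DecidableEq β] {N : α → Finset β} (hA : ∀ x, d ≤ #(N x))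
    (hB : ∀ y, d ≤ #{x | y ∈ N x}) : MinDegreeAtLeast (fun x y => y ∈ N x) d := by
  refine ⟨fun x => ?_, fun y => ?_⟩
  · convert hA x using 2
    ext
    simp
  · convert hB y using 2
    ext
    simp

namespace MaxDegreeAtMost

theorem flip (h : MaxDegreeAtMost R d) : MaxDegreeAtMost (flip R) d := ⟨h.2, h.1⟩

theorem card_le (h : MaxDegreeAtMost R d) {x : α} {s : Finset β} (hs : ∀ y ∈ s, R x y) :
    #s ≤ d := by
  classical
  exact (card_le_card fun y hy => mem_filter.2 ⟨mem_univ y, hs y hy⟩).trans (h.1 x)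

theorem mono (h : MaxDegreeAtMost S d) (hRS : ∀ x y, R x y → S x y) : MaxDegreeAtMost R d := by
  classical
  exact ⟨fun x => (card_le_card fun y hy => mem_filter.2 ⟨mem_univ y,
      hRS x y (mem_filter.1 hy).2⟩).trans (h.1 x),
    fun y => (card_le_card fun x hx => mem_filter.2 ⟨mem_univ x,
      hRS x y (mem_filter.1 hx).2⟩).trans (h.2 y)⟩

theorem or (hR : MaxDegreeAtMost R d) (hS : MaxDegreeAtMost S e) :
    MaxDegreeAtMost (fun x y => R x y ∨ S x y) (d + e) := by
  classical
  refine ⟨fun x => ?_, fun y => ?_⟩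
  · refine (card_le_card (t := univ.filter (R x) ∪ univ.filter (S x)) fun y hy => ?_).trans
      ((card_union_le _ _).trans (add_le_add (hR.1 x) (hS.1 x)))
    simpa using hy
  · refine (card_le_card (t := univ.filter (R · y) ∪ univ.filter (S · y)) fun x hx => ?_).trans
      ((card_union_le _ _).trans (add_le_add (hR.2 y) (hS.2 y)))
    simpa using hx

end MaxDegreeAtMost

theorem maxDegreeAtMost_one (hleft : ∀ x y y', R x y → R x y' → y = y')
    (hright : ∀ x x' y, R x y → R x' y → x = x') : MaxDegreeAtMost R 1 := by
  classical
  exact ⟨fun x => card_le_one.2 fun y hy y' hy' =>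
      hleft x y y' (mem_filter.1 hy).2 (mem_filter.1 hy').2,
    fun y => card_le_one.2 fun x hx x' hx' =>
      hright x x' y (mem_filter.1 hx).2 (mem_filter.1 hx').2⟩

theorem IsMatchingSet.maxDegreeAtMost {n : ℕ} {M : Finset (Fin n × Fin n)}
    (hM : IsMatchingSet M) : MaxDegreeAtMost (fun x y => (x, y) ∈ M) 1 :=
  maxDegreeAtMost_one (fun _ _ _ h h' => congrArg Prod.snd (hM _ h _ h' (Or.inl rfl)))
    (fun _ _ _ h h' => congrArg Prod.fst (hM _ h _ h' (Or.inr rfl)))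

theorem mem_edgeFinset' {n : ℕ} {N : Fin n → Finset (Fin n)} {x y : Fin n} :
    (x, y) ∈ edgeFinset' N ↔ y ∈ N x := by
  simp [edgeFinset']

/-- A Hall violator `S` has `k - 1 ≤ |N(S)| < |S| ≤ k + 1`, so `S` and the complement of `N(S)`
contain an empty `(k + 1, k)`-biclique on one side or the other. -/
theorem exists_equiv_of_not_hasEmptyBiclique {k : ℕ} {G : α → β → Prop}
    (hα : card α = 2 * k) (hβ : card β = 2 * k) (hG : MinDegreeAtLeast G (k - 1))
    (h : ¬HasEmptyBiclique G (k + 1) k) (h' : ¬HasEmptyBiclique (flip G) (k + 1) k) :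
    ∃ f : α ≃ β, ∀ x, G x (f x) := by
  classical
  have hall : ∀ S : Finset α, #S ≤ #{y | ∃ x ∈ S, G x y} := by
    intro S
    by_contra! hlt
    set T : Finset β := {y | ∃ x ∈ S, G x y}
    have hST : ∀ x ∈ S, ∀ y ∈ Tᶜ, ¬G x y := fun x hx y hy hxy =>
      mem_compl.1 hy (mem_filter.2 ⟨mem_univ y, x, hx, hxy⟩)
    have hSα := card_le_univ S
    obtain ⟨z, hz⟩ : S.Nonempty := card_pos.1 (by omega)
    have hT : k - 1 ≤ #T := hG.le_card fun y hy => mem_filter.2 ⟨mem_univ y, z, hz, hy⟩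
    obtain ⟨y, hy⟩ : Tᶜ.Nonempty := by rw [← card_pos, card_compl]; omega
    have hS : k - 1 ≤ #Sᶜ := hG.flip.le_card (x := y) fun x hx =>
      mem_compl.2 fun hxS => hST x hxS y hy hx
    rw [card_compl] at hS
    rcases (show #S = k + 1 ∨ #S = k by omega) with hSk | hSk
    · obtain ⟨Q, hQ, hQk⟩ := exists_subset_card_eq (s := Tᶜ) (n := k)
        (by rw [card_compl]; omega)
      exact h ⟨S, Q, hSk, hQk, fun x hx y hy => hST x hx y (hQ hy)⟩
    · exact h' ⟨Tᶜ, S, by rw [card_compl]; omega, hSk, fun y hy x hx => hST x hx y hy⟩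
  obtain ⟨f, hf, hfG⟩ := (Fintype.all_card_le_filter_rel_iff_exists_injective G).1 hall
  exact ⟨Equiv.ofBijective f ((Fintype.bijective_iff_injective_and_card f).2 ⟨hf, by omega⟩),
    hfG⟩

variable {a : α} {b : β} {X : Finset α} {Y : Finset β}

namespace NbhdDeleteEdgeSubset

theorem le_card (h : NbhdDeleteEdgeSubset H a b X Y) (hH : MinDegreeAtLeast H d)
    (hX : 2 ≤ #X) : d ≤ #Y := by
  obtain ⟨x, hx, hxa⟩ := exists_mem_ne hX a
  exact hH.le_card fun y hxy => by
    by_contra hy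
    exact hxa (h x y hxy hx hy).1

theorem adj_iff_mem (h : NbhdDeleteEdgeSubset H a b X Y) (hH : MinDegreeAtLeast H d)
    (hY : #Y ≤ d) {x : α} (hx : x ∈ X) (hxa : x ≠ a) {y : β} : H x y ↔ y ∈ Y := by
  have hnbhd : ∀ y, H x y → y ∈ Y := fun y hxy => by
    by_contra hy
    exact hxa (h x y hxy hx hy).1
  exact ⟨hnbhd y, hH.adj_of_mem hnbhd hY⟩

variable [DecidableEq α] [DecidableEq β]

theorem flip (h : NbhdDeleteEdgeSubset H a b X Y) :
    NbhdDeleteEdgeSubset (flip H) b a Yᶜ Xᶜ := fun y x hxy hy hx =>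
  (h x y hxy (by simpa using hx) (mem_compl.1 hy)).symm

theorem card_eq {k : ℕ} (h : NbhdDeleteEdgeSubset H a b X Y) (hH : MinDegreeAtLeast H (k - 1))
    (hα : card α = 2 * k) (hβ : card β = 2 * k) (hXY : #X = #Y + 2) :
    #X = k + 1 ∧ #Y = k - 1 := by
  have hXα := card_le_univ X
  have hY := h.le_card hH (by omega)
  have hX := h.flip.le_card hH.flip (by rw [card_compl]; omega)
  rw [card_compl] at hX
  omega

end NbhdDeleteEdgeSubset

/-- The paper's `Ẽ` is `{ab}` (or empty) and `N_{H - Ẽ}(X) ⊆ Y`; the two added and two removed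
matchings enter only through the degree bounds `added` and `removed`. -/
structure DeficientPerturbation (k : ℕ) (H H' : α → β → Prop) (X : Finset α) (Y : Finset β)
    (a : α) (b : β) : Prop where
  four_le : 4 ≤ k
  card_left : card α = 2 * k
  card_right : card β = 2 * k
  minDegree : MinDegreeAtLeast H (k - 1)
  minDegree' : MinDegreeAtLeast H' (k - 1)
  added : MaxDegreeAtMost (fun x y => H' x y ∧ ¬H x y) 2
  removed : MaxDegreeAtMost (fun x y => H x y ∧ ¬H' x y) 2
  card_X : #X = k + 1
  card_Y : #Y = k - 1
  nbhd : NbhdDeleteEdgeSubset H a b X Y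
  matching : ∃ x₁ x₂ y₁ y₂, x₁ ∈ X ∧ x₂ ∈ X ∧ x₁ ≠ x₂ ∧ y₁ ∉ Y ∧ y₂ ∉ Y ∧ y₁ ≠ y₂ ∧
    H' x₁ y₁ ∧ H' x₂ y₂

namespace DeficientPerturbation

variable {k : ℕ} {H' : α → β → Prop} {P : Finset α} {Q : Finset β}

theorem adj_iff_mem (hc : DeficientPerturbation k H H' X Y a b) {x : α} (hx : x ∈ X)
    (hxa : x ≠ a) {y : β} : H x y ↔ y ∈ Y :=
  hc.nbhd.adj_iff_mem hc.minDegree hc.card_Y.le hx hxa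

theorem card_le_two_of_adj (hc : DeficientPerturbation k H H' X Y a b)
    (hPQ : ∀ x ∈ P, ∀ y ∈ Q, ¬H' x y) {q : β} (hq : q ∈ Q) {s : Finset α} (hsP : s ⊆ P)
    (hs : ∀ x ∈ s, H x q) : #s ≤ 2 :=
  hc.removed.flip.card_le fun x hx => ⟨hs x hx, hPQ x (hsP hx) q hq⟩

theorem card_lt_two_of_forall_not_adj [DecidableEq β] (hc : DeficientPerturbation k H H' X Y a b)
    (haX : a ∈ X) {T : Finset β} (hTY : T ⊆ Y) (hT : ∀ q ∈ T, ¬H a q) : #T < 2 := by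
  have hdeg := hc.minDegree.le_card (x := a) (s := insert b (Y \ T)) fun y hy => by
    by_cases hyY : y ∈ Y
    · exact mem_insert_of_mem (mem_sdiff.2 ⟨hyY, fun h => hT y h hy⟩)
    · rw [(hc.nbhd a y hy haX hyY).2]
      exact mem_insert_self b _
  have := card_insert_le b (Y \ T)
  rw [card_sdiff_of_subset hTY, hc.card_Y] at this
  have := card_le_card hTY
  have := hc.four_le
  omega

variable [DecidableEq α]

theorem adj'_of_notMem (hc : DeficientPerturbation k H H' X Y a b) (hP : #P = k + 1)
    (hPQ : ∀ x ∈ P, ∀ y ∈ Q, ¬H' x y) {x : α} (hx : x ∉ P) {y : β} (hy : y ∈ Q) : H' x y :=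
  hc.minDegree'.flip.adj_of_mem (s := Pᶜ) (fun x hxy => mem_compl.2 fun hxP => hPQ x hxP y hy hxy)
    (by rw [card_compl, hc.card_left, hP]; omega) (mem_compl.2 hx)

variable [DecidableEq β]

theorem flip (hc : DeficientPerturbation k H H' X Y a b) :
    DeficientPerturbation k (flip H) (flip H') Yᶜ Xᶜ b a where
  four_le := hc.four_le
  card_left := hc.card_right
  card_right := hc.card_left
  minDegree := hc.minDegree.flip
  minDegree' := hc.minDegree'.flip
  added := hc.added.flip
  removed := hc.removed.flip
  card_X := by rw [card_compl, hc.card_right, hc.card_Y]; have := hc.four_le; omega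
  card_Y := by rw [card_compl, hc.card_left, hc.card_X]; omega
  nbhd := hc.nbhd.flip
  matching := by
    obtain ⟨x₁, x₂, y₁, y₂, hx₁, hx₂, hx, hy₁, hy₂, hy, h₁, h₂⟩ := hc.matching
    exact ⟨y₁, y₂, x₁, x₂, mem_compl.2 hy₁, mem_compl.2 hy₂, hy, by simpa using hx₁,
      by simpa using hx₂, hx, h₁, h₂⟩

theorem adj_iff_notMem (hc : DeficientPerturbation k H H' X Y a b) {y : β} (hy : y ∉ Y)
    (hyb : y ≠ b) {x : α} : H x y ↔ x ∉ X :=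
  (hc.flip.adj_iff_mem (mem_compl.2 hy) hyb).trans mem_compl

theorem false_of_disjoint (hc : DeficientPerturbation k H H' X Y a b) (hP : #P = k + 1)
    (hQ : #Q = k) (hPQ : ∀ x ∈ P, ∀ y ∈ Q, ¬H' x y) (hQY : Disjoint Q Y) : False := by
  by_cases hPX : P ⊆ X
  · have hPX : P = X := eq_of_subset_of_card_le hPX (by rw [hc.card_X, hP])
    obtain ⟨x₁, x₂, y₁, y₂, hx₁, hx₂, -, hy₁, hy₂, hy, h₁, h₂⟩ := hc.matching
    -- the two matched vertices of `Yᶜ` avoid `Q`, but `Q ∪ Y` misses only one vertex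
    have hout : ∀ {x y}, x ∈ X → y ∉ Y → H' x y → y ∈ (Q ∪ Y)ᶜ := fun hx hy hxy =>
      mem_compl.2 fun hQY => (mem_union.1 hQY).elim (hPQ _ (hPX ▸ hx) _ · hxy) hy
    have hcard : #(Q ∪ Y)ᶜ = 1 := by
      rw [card_compl, card_union_of_disjoint hQY, hc.card_right, hQ, hc.card_Y]
      have := hc.four_le
      omega
    exact hy (card_le_one.1 hcard.le _ (hout hx₁ hy₁ h₁) _ (hout hx₂ hy₂ h₂))
  · obtain ⟨w, hwP, hwX⟩ := not_subset.1 hPX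
    have hremoved : #(Q.erase b) ≤ 2 := hc.removed.card_le (x := w) fun y hy => by
      obtain ⟨hyb, hyQ⟩ := mem_erase.1 hy
      exact ⟨(hc.adj_iff_notMem (disjoint_left.1 hQY hyQ) hyb).2 hwX, hPQ w hwP y hyQ⟩
    have := pred_card_le_card_erase (s := Q) (a := b)
    have := hc.four_le
    omega

theorem false_of_sdiff_subset_singleton (hc : DeficientPerturbation k H H' X Y a b)
    (hP : #P = k + 1) (hQ : #Q = k) (hPQ : ∀ x ∈ P, ∀ y ∈ Q, ¬H' x y) (hQY : Q \ Y ⊆ {b}) :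
    False := by
  have hYQ : Y ⊆ Q := by
    have hQY₁ : #(Q \ Y) ≤ 1 := (card_le_card hQY).trans (card_singleton b).le
    have := card_inter_add_card_sdiff Q Y
    have hQY' : Q ∩ Y = Y := eq_of_subset_of_card_le inter_subset_right (by rw [hc.card_Y]; omega)
    exact hQY' ▸ inter_subset_left
  have hPX : 1 < #(P ∩ X) := by
    have := card_union_add_card_inter P X
    have := card_le_univ (P ∪ X)
    rw [hc.card_left] at this
    have := hc.card_X
    omega
  obtain ⟨u, hu, hua⟩ := exists_mem_ne hPX a
  obtain ⟨huP, huX⟩ := mem_inter.1 hu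
  -- the `H`-neighbourhood of `u` is `Y ⊆ Q`, so every `H'`-edge at `u` is new
  have := hc.minDegree'.le_of_maxDegreeAtMost hc.added (x := u) fun y hy =>
    ⟨hy, fun h => hPQ u huP y (hYQ ((hc.adj_iff_mem huX hua).1 h)) hy⟩
  have := hc.four_le
  omega

theorem card_sdiff_le_two (hc : DeficientPerturbation k H H' X Y a b) (hP : #P = k + 1)
    (hPQ : ∀ x ∈ P, ∀ y ∈ Q, ¬H' x y) {y₀ : β} (hy₀ : y₀ ∈ Q \ Y) (hy₀b : y₀ ≠ b) :
    #(X \ P) ≤ 2 :=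
  hc.added.flip.card_le fun x hx =>
    ⟨hc.adj'_of_notMem hP hPQ (mem_sdiff.1 hx).2 (mem_sdiff.1 hy₀).1,
      fun h => hy₀b (hc.nbhd x y₀ h (mem_sdiff.1 hx).1 (mem_sdiff.1 hy₀).2).2⟩

theorem false_of_mem_inter_of_mem_sdiff (hc : DeficientPerturbation k H H' X Y a b)
    (hP : #P = k + 1) (hQ : #Q = k) (hPQ : ∀ x ∈ P, ∀ y ∈ Q, ¬H' x y) {q₀ y₀ : β}
    (hq₀ : q₀ ∈ Q ∩ Y) (hy₀ : y₀ ∈ Q \ Y) (hy₀b : y₀ ≠ b) : False := by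
  have hk := hc.four_le
  have hX := hc.card_X
  have hY := hc.card_Y
  have hXP := hc.card_sdiff_le_two hP hPQ hy₀ hy₀b
  have hXP' := card_inter_add_card_sdiff X P
  have hXPa : #((X ∩ P).erase a) ≤ 2 :=
    hc.card_le_two_of_adj hPQ (mem_inter.1 hq₀).1 ((erase_subset _ _).trans inter_subset_right)
      fun x hx => (hc.adj_iff_mem (mem_inter.1 (mem_of_mem_erase hx)).1
        (ne_of_mem_erase hx)).2 (mem_inter.1 hq₀).2
  -- hence `k = 4`, `a ∈ X ∩ P`, and `X ∩ P` has three elements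
  have haXP : a ∈ X ∩ P := by
    by_contra h
    rw [erase_eq_of_notMem h] at hXPa
    omega
  rw [card_erase_of_mem haXP] at hXPa
  obtain ⟨haX, haP⟩ := mem_inter.1 haXP
  obtain ⟨x', hx'⟩ : (X \ P).Nonempty := card_pos.1 (by omega)
  obtain ⟨hx'X, hx'P⟩ := mem_sdiff.1 hx'
  have hx'a : x' ≠ a := by rintro rfl; exact hx'P haP
  have hQY : #(Q \ Y) ≤ 2 := hc.added.card_le (x := x') fun y hy =>
    ⟨hc.adj'_of_notMem hP hPQ hx'P (mem_sdiff.1 hy).1,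
      fun h => (mem_sdiff.1 hy).2 ((hc.adj_iff_mem hx'X hx'a).1 h)⟩
  have hQY' := card_inter_add_card_sdiff Q Y
  -- an `H`-edge from `a` to `Q ∩ Y` would be a third deleted edge there
  have ha : ∀ q ∈ Q ∩ Y, ¬H a q := fun q hq haq => by
    have := hc.card_le_two_of_adj hPQ (mem_inter.1 hq).1 (s := X ∩ P) inter_subset_right
      fun x hx => by
      rcases eq_or_ne x a with rfl | hxa
      · exact haq
      · exact (hc.adj_iff_mem (mem_inter.1 hx).1 hxa).2 (mem_inter.1 hq).2
    omega
  have := hc.card_lt_two_of_forall_not_adj haX inter_subset_right ha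
  omega

theorem not_hasEmptyBiclique (hc : DeficientPerturbation k H H' X Y a b) :
    ¬HasEmptyBiclique H' (k + 1) k := by
  rintro ⟨P, Q, hP, hQ, hPQ⟩
  by_cases hQY : Disjoint Q Y
  · exact hc.false_of_disjoint hP hQ hPQ hQY
  obtain ⟨q₀, hq₀⟩ := not_disjoint_iff_nonempty_inter.1 hQY
  by_cases h : Q \ Y ⊆ {b}
  · exact hc.false_of_sdiff_subset_singleton hP hQ hPQ h
  obtain ⟨y₀, hy₀, hy₀b⟩ := not_subset.1 h
  exact hc.false_of_mem_inter_of_mem_sdiff hP hQ hPQ hq₀ hy₀ (by simpa using hy₀b)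

end DeficientPerturbation

theorem stmt12_general (k : ℕ) (hk : 4 ≤ k)
    (N N' : Fin (2 * k) → Finset (Fin (2 * k)))
    (hA : ∀ x, k - 1 ≤ (N x).card)
    (hB : ∀ y : Fin (2 * k), k - 1 ≤ (Finset.univ.filter (fun x => y ∈ N x)).card)
    (hA' : ∀ x, k - 1 ≤ (N' x).card)
    (hB' : ∀ y : Fin (2 * k), k - 1 ≤ (Finset.univ.filter (fun x => y ∈ N' x)).card)
    (X : Finset (Fin (2 * k)))
    (E : Finset (Fin (2 * k) × Fin (2 * k)))
    (hEcard : E.card ≤ 1)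
    (hdef : X.card = (nbhdMinus N E X).card + 2)
    (M₁ M₂ M₃ M₄ : Finset (Fin (2 * k) × Fin (2 * k)))
    (hM₁ : IsMatchingSet M₁) (hM₂ : IsMatchingSet M₂)
    (hM₃ : IsMatchingSet M₃) (hM₄ : IsMatchingSet M₄)
    (hH' : edgeFinset' N' = (edgeFinset' N ∪ M₁ ∪ M₂) \ (M₃ ∪ M₄))
    (hmatch : ∃ x₁ x₂ y₁ y₂ : Fin (2 * k), x₁ ∈ X ∧ x₂ ∈ X ∧ x₁ ≠ x₂ ∧
      y₁ ∉ nbhdMinus N E X ∧ y₂ ∉ nbhdMinus N E X ∧ y₁ ≠ y₂ ∧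
      y₁ ∈ N' x₁ ∧ y₂ ∈ N' x₂) :
    ∃ f : Fin (2 * k) ≃ Fin (2 * k), ∀ x, f x ∈ N' x := by
  classical
  set Y := nbhdMinus N E X
  have : Nonempty (Fin (2 * k)) := ⟨⟨0, by omega⟩⟩
  obtain ⟨⟨a, b⟩, hab⟩ := card_le_one_iff_subset_singleton.1 hEcard
  have hnbhd : NbhdDeleteEdgeSubset (fun x y => y ∈ N x) a b X Y := fun x y hxy hx hy => by
    have hE : (x, y) ∈ E := by
      by_contra hE
      exact hy (mem_biUnion.2 ⟨x, hx, mem_filter.2 ⟨hxy, hE⟩⟩)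
    simpa using hab hE
  have hedge : ∀ x y, y ∈ N' x ↔
      (y ∈ N x ∨ (x, y) ∈ M₁ ∨ (x, y) ∈ M₂) ∧ ¬((x, y) ∈ M₃ ∨ (x, y) ∈ M₄) := by
    intro x y
    rw [← mem_edgeFinset', hH']
    simp [mem_edgeFinset']
  have hmin := minDegreeAtLeast_mem hA hB
  obtain ⟨hX, hY⟩ := hnbhd.card_eq hmin (Fintype.card_fin _) (Fintype.card_fin _) hdef
  have hc : DeficientPerturbation k (fun x y => y ∈ N x) (fun x y => y ∈ N' x) X Y a b :=
    { four_le := hk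
      card_left := Fintype.card_fin _
      card_right := Fintype.card_fin _
      minDegree := hmin
      minDegree' := minDegreeAtLeast_mem hA' hB'
      added := (hM₁.maxDegreeAtMost.or hM₂.maxDegreeAtMost).mono fun x y h => by
        have := (hedge x y).1 h.1
        tauto
      removed := (hM₃.maxDegreeAtMost.or hM₄.maxDegreeAtMost).mono fun x y h =>
        by_contra fun hM => h.2 ((hedge x y).2 ⟨Or.inl h.1, hM⟩)
      card_X := hX
      card_Y := hY
      nbhd := hnbhd
      matching := hmatch }
  exact exists_equiv_of_not_hasEmptyBiclique hc.card_left hc.card_right hc.minDegree'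
    hc.not_hasEmptyBiclique hc.flip.not_hasEmptyBiclique

theorem stmt12 (k : ℕ) (hk : 4 ≤ k)
    (N N' : Fin (2 * k) → Finset (Fin (2 * k)))
    (hA : ∀ x, k - 1 ≤ (N x).card)
    (hB : ∀ y : Fin (2 * k), k - 1 ≤ (Finset.univ.filter (fun x => y ∈ N x)).card)
    (hA' : ∀ x, k - 1 ≤ (N' x).card)
    (hB' : ∀ y : Fin (2 * k), k - 1 ≤ (Finset.univ.filter (fun x => y ∈ N' x)).card)
    (X : Finset (Fin (2 * k)))
    (E : Finset (Fin (2 * k) × Fin (2 * k)))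
    (hEcard : E.card ≤ 1) (hEsub : E ⊆ edgeFinset' N)
    (hdef : X.card = (nbhdMinus N E X).card + 2)
    (M₁ M₂ M₃ M₄ : Finset (Fin (2 * k) × Fin (2 * k)))
    (hM₁ : IsMatchingSet M₁) (hM₂ : IsMatchingSet M₂)
    (hM₃ : IsMatchingSet M₃) (hM₄ : IsMatchingSet M₄)
    (hH' : edgeFinset' N' = (edgeFinset' N ∪ M₁ ∪ M₂) \ (M₃ ∪ M₄))
    (hmatch : ∃ x₁ x₂ y₁ y₂ : Fin (2 * k), x₁ ∈ X ∧ x₂ ∈ X ∧ x₁ ≠ x₂ ∧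
      y₁ ∉ nbhdMinus N E X ∧ y₂ ∉ nbhdMinus N E X ∧ y₁ ≠ y₂ ∧
      y₁ ∈ N' x₁ ∧ y₂ ∈ N' x₂) :
    ∃ f : Fin (2 * k) ≃ Fin (2 * k), ∀ x, f x ∈ N' x :=
  stmt12_general k hk N N' hA hB hA' hB' X E hEcard hdef M₁ M₂ M₃ M₄ hM₁ hM₂ hM₃ hM₄ hH' hmatch
end

section
/- If a graph G is d-degenerate, then its correspondence packing number satisfies χ*_c(G) ≤ 2d; that is, for every 2d-correspondence assignment of G there exist 2d pairwise disjoint correspondence colorings. -/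
/-!
Induct on the vertex set: a `d`-degenerate set `S` has a vertex `v` with at most `d` neighbours
`N` in `S`; pack `S \ {v}` first. Coloring `i` must avoid at `v` the at most `d` colors
`σ u v (φ i u)`, `u ∈ N`, and since each `φ · u` is injective every color is forbidden to at
most `|N| ≤ d` colorings. With `2d` colors, Hall's condition for choosing pairwise distinct
allowed colors at `v` then holds: a set of at most `d` colorings has `≥ d` allowed colors
already in one of them, and a larger set covers every color.
-/

open Finset Function

theorem exists_injective_forall_notMem {α β : Type*} [Fintype α] [Fintype β] [DecidableEq β]
    (F : α → Finset β) (d : ℕ) (hF : ∀ i, #(F i) ≤ d) (hF' : ∀ c, #{i | c ∈ F i} ≤ d)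
    (hd : 2 * d ≤ Fintype.card β) (hαβ : Fintype.card α ≤ Fintype.card β) :
    ∃ f : α → β, Injective f ∧ ∀ i, f i ∉ F i := by
  have hall : ∀ s : Finset α, #s ≤ #(s.biUnion fun i => (F i)ᶜ) := by
    intro s
    by_cases hs : #s ≤ Fintype.card β - d
    · rcases s.eq_empty_or_nonempty with rfl | ⟨i, hi⟩
      · simp
      calc #s ≤ Fintype.card β - d := hs
        _ ≤ #(F i)ᶜ := by rw [card_compl]; have := hF i; omega
        _ ≤ #(s.biUnion fun i => (F i)ᶜ) := card_le_card (subset_biUnion_of_mem (fun i => (F i)ᶜ) hi)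
    · have hcover : s.biUnion (fun i => (F i)ᶜ) = univ := by
        refine eq_univ_of_forall fun c => ?_
        by_contra hc
        have hs_sub : s ⊆ ({i | c ∈ F i} : Finset α) := fun i hi => by
          simp only [mem_biUnion, mem_compl, not_exists, not_and, not_not] at hc
          simpa using hc i hi
        have := card_le_card hs_sub
        have := hF' c
        omega
      rw [hcover, card_univ]
      exact (card_le_univ s).trans hαβ
  obtain ⟨f, hf, hmem⟩ := (all_card_le_biUnion_card_iff_exists_injective fun i => (F i)ᶜ).mp hall
  exact ⟨f, hf, fun i => mem_compl.mp (hmem i)⟩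

theorem exists_injective_forall_ne {ι α β : Type*} [Fintype α] [Fintype β] [DecidableEq β]
    (N : Finset ι) (d : ℕ) (hN : #N ≤ d) (g : ι → α → β) (hg : ∀ u ∈ N, Injective (g u))
    (hd : 2 * d ≤ Fintype.card β) (hαβ : Fintype.card α ≤ Fintype.card β) :
    ∃ f : α → β, Injective f ∧ ∀ i, ∀ u ∈ N, g u i ≠ f i := by
  classical
  have hF : ∀ i, #(N.image (g · i)) ≤ d := fun i => card_image_le.trans hN
  have hF' : ∀ c, #{i | c ∈ N.image (g · i)} ≤ d := by
    intro c
    have hsub : ({i | c ∈ N.image (g · i)} : Finset α) ⊆ N.biUnion fun u => {i | g u i = c} := by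
      intro i
      simp
    have hfiber : ∀ u ∈ N, #({i | g u i = c} : Finset α) ≤ 1 := fun u hu =>
      card_le_one.mpr fun a ha b hb => hg u hu (by simp_all)
    calc _ ≤ _ := card_le_card hsub
      _ ≤ #N * 1 := card_biUnion_le_card_mul N _ 1 hfiber
      _ ≤ d := by simpa using hN
  obtain ⟨f, hf, hfF⟩ := exists_injective_forall_notMem _ d hF hF' hd hαβ
  exact ⟨f, hf, fun i u hu h => hfF i (mem_image.mpr ⟨u, hu, h⟩)⟩

namespace SimpleGraph

variable {V β : Type*} {G : SimpleGraph V} (σ : ∀ u v : V, G.Adj u v → β ≃ β)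

def IsCorrespondencePackingOn (S : Finset V) (φ : β → V → β) : Prop :=
  (∀ i u v (h : G.Adj u v), u ∈ S → v ∈ S → σ u v h (φ i u) ≠ φ i v) ∧
    ∀ v ∈ S, Injective fun i => φ i v

variable {σ}

theorem IsCorrespondencePackingOn.insert [DecidableEq V] [Fintype β] [G.LocallyFinite]
    (hσ : ∀ (u v : V) (h : G.Adj u v), σ v u h.symm = (σ u v h).symm)
    {S : Finset V} {v : V} {d : ℕ} {φ : β → V → β}
    (hφ : IsCorrespondencePackingOn σ (S.erase v) φ) (hv : #(G.neighborFinset v ∩ S) ≤ d)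
    (hd : 2 * d ≤ Fintype.card β) :
    ∃ φ' : β → V → β, IsCorrespondencePackingOn σ S φ' := by
  classical
  set N := G.neighborFinset v ∩ S.erase v
  have hN : #N ≤ d := (card_le_card (inter_subset_inter_left (erase_subset v S))).trans hv
  have hmemN : ∀ {u}, u ∈ N ↔ G.Adj u v ∧ u ∈ S.erase v := by
    simp [N, G.adj_comm v]
  let g : V → β → β := fun u i => if h : G.Adj u v then σ u v h (φ i u) else φ i u
  have hg : ∀ u ∈ N, Injective (g u) := by
    intro u hu
    obtain ⟨hadj, huS⟩ := hmemN.mp hu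
    intro a b hab
    simp only [g, dif_pos hadj] at hab
    exact hφ.2 u huS ((σ u v hadj).injective hab)
  obtain ⟨f, hf, hfg⟩ := exists_injective_forall_ne N d hN g hg hd le_rfl
  have hf_ne : ∀ i u (h : G.Adj u v), u ∈ S.erase v → σ u v h (φ i u) ≠ f i := by
    intro i u h hu
    simpa only [g, dif_pos h] using hfg i u (hmemN.mpr ⟨h, hu⟩)
  refine ⟨fun i => update (φ i) v (f i), ?_, ?_⟩
  · intro i u w h hu hw
    rcases eq_or_ne u v with rfl | huv
    · rcases eq_or_ne w u with rfl | hwu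
      · exact absurd h (G.loopless.irrefl _)
      simp only [update_self, update_of_ne hwu]
      intro heq
      refine hf_ne i w h.symm (mem_erase.mpr ⟨hwu, hw⟩) ?_
      rw [hσ u w h, ← heq, Equiv.symm_apply_apply]
    · rcases eq_or_ne w v with rfl | hwv
      · simpa only [update_self, update_of_ne huv] using
          hf_ne i u h (mem_erase.mpr ⟨huv, hu⟩)
      · simpa only [update_of_ne huv, update_of_ne hwv] using
          hφ.1 i u w h (mem_erase.mpr ⟨huv, hu⟩) (mem_erase.mpr ⟨hwv, hw⟩)
  · intro w hw
    rcases eq_or_ne w v with rfl | hwv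
    · simpa only [update_self] using hf
    · simpa only [update_of_ne hwv] using hφ.2 w (mem_erase.mpr ⟨hwv, hw⟩)

theorem exists_isCorrespondencePackingOn [DecidableEq V] [Fintype β] [G.LocallyFinite]
    (hσ : ∀ (u v : V) (h : G.Adj u v), σ v u h.symm = (σ u v h).symm) {d : ℕ}
    (hdegen : ∀ S : Finset V, S.Nonempty → ∃ v ∈ S, #(G.neighborFinset v ∩ S) ≤ d)
    (hd : 2 * d ≤ Fintype.card β) (S : Finset V) :
    ∃ φ : β → V → β, IsCorrespondencePackingOn σ S φ := by
  induction S using strongInduction with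
  | H S ih =>
    rcases S.eq_empty_or_nonempty with rfl | hS
    · exact ⟨fun i _ => i, by simp [IsCorrespondencePackingOn]⟩
    obtain ⟨v, hvS, hv⟩ := hdegen S hS
    obtain ⟨φ, hφ⟩ := ih (S.erase v) (erase_ssubset hvS)
    exact hφ.insert hσ hv hd

end SimpleGraph

theorem stmt17 {V : Type*} [Fintype V] [DecidableEq V]
    (G : SimpleGraph V) [DecidableRel G.Adj] (d : ℕ)
    (hdegen : ∀ S : Finset V, S.Nonempty → ∃ v ∈ S, (G.neighborFinset v ∩ S).card ≤ d)
    (σ : ∀ u v : V, G.Adj u v → (Fin (2 * d) ≃ Fin (2 * d)))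
    (hσ : ∀ (u v : V) (h : G.Adj u v), σ v u h.symm = (σ u v h).symm) :
    ∃ φ : Fin (2 * d) → V → Fin (2 * d),
      (∀ (i : Fin (2 * d)) (u v : V) (h : G.Adj u v), σ u v h (φ i u) ≠ φ i v) ∧
      (∀ v : V, Function.Injective fun i => φ i v) := by
  obtain ⟨φ, hcol, hinj⟩ :=
    SimpleGraph.exists_isCorrespondencePackingOn hσ hdegen (by simp) univ
  exact ⟨φ, fun i u v h => hcol i u v h (mem_univ u) (mem_univ v),
    fun v => hinj v (mem_univ v)⟩
end

section
/- For every cycle C_k with k ≥ 3, there exists a 3-correspondence assignment of C_k that admits no packing of three pairwise disjoint correspondence colorings; consequently χ*_c(C_k) ≥ 4. -/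
/-!
A packing `φ` turns every vertex `i` into a permutation `c ↦ φ c i` of the three colours. Along
an edge `ij` the permutations `p i`, `p j` and `σ i j` satisfy `σ i j (p i c) ≠ p j c` for all
`c`, so `(p j)⁻¹ * σ i j * p i` is a derangement of `Fin 3`, i.e. a 3-cycle, and is even. Hence
`sign (p j) = sign (σ i j) * sign (p i)`, and going once around the cycle the product of the
signs of the `σ i j` must be `1`. Twisting a single edge by a transposition makes it `-1`.
-/

open Equiv Equiv.Perm SimpleGraph

def twistAt {V : Type*} [DecidableEq V] (a b i j : V) : Perm (Fin 3) :=
  if s(i, j) = s(a, b) then swap 0 1 else 1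

lemma twistAt_comm {V : Type*} [DecidableEq V] (a b i j : V) :
    twistAt a b j i = (twistAt a b i j).symm := by
  unfold twistAt
  rw [Sym2.eq_swap]
  split_ifs
  · exact (symm_swap 0 1).symm
  · rfl

lemma twistAt_self {V : Type*} [DecidableEq V] (a b : V) : twistAt a b a b = swap 0 1 :=
  if_pos rfl

lemma twistAt_last_zero_castSucc_succ {n : ℕ} (m : Fin (n + 2)) :
    twistAt (Fin.last (n + 2)) 0 m.castSucc m.succ = 1 := by
  refine if_neg ?_
  rw [Sym2.eq_iff, Fin.ext_iff, Fin.ext_iff, Fin.ext_iff, Fin.ext_iff]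
  simp only [Fin.val_castSucc, Fin.val_succ, Fin.val_last, Fin.val_zero]
  omega

lemma sign_eq_one_of_forall_apply_ne_fin_three (g : Perm (Fin 3)) (hg : ∀ x, g x ≠ x) :
    sign g = 1 := by
  revert g
  decide

lemma sign_eq_sign_mul_sign_of_forall_apply_ne_fin_three {τ p q : Perm (Fin 3)}
    (h : ∀ c, τ (p c) ≠ q c) : sign q = sign τ * sign p := by
  have hder : ∀ c, (q⁻¹ * τ * p) c ≠ c := fun c hc => by
    rw [Perm.mul_apply, Perm.mul_apply, Perm.inv_eq_iff_eq] at hc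
    exact h c hc
  have := sign_eq_one_of_forall_apply_ne_fin_three _ hder
  rwa [map_mul, map_mul, map_inv, mul_assoc, inv_mul_eq_one] at this

lemma Fin.apply_eq_apply_zero_of_castSucc_eq_succ {M : Type*} {n : ℕ} (s : Fin (n + 1) → M)
    (hs : ∀ m : Fin n, s m.castSucc = s m.succ) (i : Fin (n + 1)) : s i = s 0 := by
  induction i using Fin.induction with
  | zero => rfl
  | succ m ih => rw [← hs, ih]

lemma cycleGraph_adj_castSucc_succ {n : ℕ} (m : Fin n) :
    (cycleGraph (n + 1)).Adj m.castSucc m.succ :=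
  pathGraph_le_cycleGraph (pathGraph_adj.mpr (Or.inl rfl))

lemma cycleGraph_adj_last_zero (n : ℕ) : (cycleGraph (n + 2)).Adj (Fin.last (n + 1)) 0 :=
  cycleGraph_adj.mpr (Or.inr (by simp))

theorem stmt18 (k : ℕ) (hk : 3 ≤ k) :
    ∃ σ : ∀ i j : Fin k, (SimpleGraph.cycleGraph k).Adj i j → (Fin 3 ≃ Fin 3),
      (∀ (i j : Fin k) (h : (SimpleGraph.cycleGraph k).Adj i j),
        σ j i h.symm = (σ i j h).symm) ∧
      ¬ ∃ φ : Fin 3 → Fin k → Fin 3,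
          (∀ (c : Fin 3) (i j : Fin k) (h : (SimpleGraph.cycleGraph k).Adj i j),
            σ i j h (φ c i) ≠ φ c j) ∧
          (∀ i : Fin k, Function.Injective fun c => φ c i) := by
  obtain ⟨n, rfl⟩ : ∃ n, k = n + 3 := ⟨k - 3, by omega⟩
  refine ⟨fun i j _ => twistAt (Fin.last (n + 2)) 0 i j, fun i j _ => twistAt_comm _ _ i j, ?_⟩
  rintro ⟨φ, hcol, hinj⟩
  let p : Fin (n + 3) → Perm (Fin 3) := fun i => ofBijective _ (hinj i).bijective_of_finite
  have hsign : ∀ i j, (cycleGraph (n + 3)).Adj i j →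
      sign (p j) = sign (twistAt (Fin.last (n + 2)) 0 i j) * sign (p i) := fun i j h =>
    sign_eq_sign_mul_sign_of_forall_apply_ne_fin_three (hcol · i j h)
  have hpath : sign (p (Fin.last (n + 2))) = sign (p 0) :=
    Fin.apply_eq_apply_zero_of_castSucc_eq_succ (sign ∘ p) (fun m => by
      simp only [Function.comp_apply, hsign _ _ (cycleGraph_adj_castSucc_succ m),
        twistAt_last_zero_castSucc_succ, map_one, one_mul]) _
  have hclose := hsign _ _ (cycleGraph_adj_last_zero (n + 1))
  rw [twistAt_self, sign_swap (by decide), hpath, neg_one_mul] at hclose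
  exact units_ne_neg_self _ hclose
end

section
/- If the correspondence packing number of G − v is at most k and the degree of v in G is at most k/2, then the correspondence packing number of G is at most k. -/
/-!
Colour `G - v` with a packing `φ` and extend every colouring `φ i` to `v`. A colour `c` is
allowed for `φ i` at `v` if no neighbour `w` has `σ v w c = φ i w`. Each neighbour forbids one
colour per colouring, and (the `φ i w` being distinct) one colouring per colour, so in the
bipartite graph "colouring `i` – allowed colour `c`" both sides have minimum degree at least
`k - d(v) ≥ k / 2`. Such a bipartite graph satisfies Hall's condition, and a perfect matching
is exactly a choice of pairwise distinct colours at `v` completing the packing.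
-/

open Finset

theorem Finset.exists_injective_mem_of_le_card {ι α : Type*} [Fintype ι] [Fintype α]
    [DecidableEq α] (t : ι → Finset α) (δ : ℕ) (hcard : Fintype.card ι ≤ Fintype.card α)
    (hlarge : ∀ i, δ ≤ #(t i)) (hmiss : ∀ c, #{i | c ∉ t i} ≤ δ) :
    ∃ f : ι → α, Function.Injective f ∧ ∀ i, f i ∈ t i := by
  classical
  refine (all_card_le_biUnion_card_iff_existsInjective' t).mp fun s => ?_
  rcases s.eq_empty_or_nonempty with rfl | ⟨i₀, hi₀⟩
  · simp
  by_cases hs : #s ≤ δ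
  · exact hs.trans <| (hlarge i₀).trans <| card_le_card <| subset_biUnion_of_mem t hi₀
  · have hcover : s.biUnion t = univ := by
      refine eq_univ_of_forall fun c => ?_
      by_contra hc
      have hsub : s ⊆ ({i | c ∉ t i} : Finset ι) := fun i hi =>
        mem_filter.mpr ⟨mem_univ i, fun hci => hc (mem_biUnion.mpr ⟨i, hi, hci⟩)⟩
      exact hs ((card_le_card hsub).trans (hmiss c))
    rw [hcover, card_univ]
    exact (card_le_univ s).trans hcard

section AllowedColors

variable {N ι α : Type*} [Fintype N] [Fintype α] [DecidableEq α]
  (τ : N → α ≃ α) (ψ : ι → N → α)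

def allowedColors (i : ι) : Finset α := {c | ∀ w, τ w c ≠ ψ i w}

theorem card_compl_allowedColors_le (i : ι) :
    #(allowedColors τ ψ i)ᶜ ≤ Fintype.card N := by
  have hsub : (allowedColors τ ψ i)ᶜ ⊆ univ.image fun w => (τ w).symm (ψ i w) := by
    intro c hc
    simp only [allowedColors, compl_filter, mem_filter, not_forall, not_not] at hc
    obtain ⟨w, hw⟩ := hc.2
    exact mem_image.mpr ⟨w, mem_univ w, (Equiv.symm_apply_eq _).mpr hw.symm⟩
  exact (card_le_card hsub).trans card_image_le

theorem card_filter_not_mem_allowedColors_le [Fintype ι] [DecidableEq ι]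
    (hψ : ∀ w, Function.Injective (ψ · w)) (c : α) :
    #{i | c ∉ allowedColors τ ψ i} ≤ Fintype.card N := by
  have hsub : ({i | c ∉ allowedColors τ ψ i} : Finset ι) ⊆
      univ.biUnion fun w => {i | ψ i w = τ w c} := by
    intro i hi
    simp only [allowedColors, mem_filter, mem_univ, true_and, not_forall, not_not] at hi
    obtain ⟨w, hw⟩ := hi
    exact mem_biUnion.mpr ⟨w, mem_univ w, mem_filter.mpr ⟨mem_univ i, hw.symm⟩⟩
  have hfiber : ∀ w ∈ (univ : Finset N), #({i | ψ i w = τ w c} : Finset ι) ≤ 1 :=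
    fun w _ => card_le_one.mpr fun i hi j hj =>
      hψ w ((mem_filter.mp hi).2.trans (mem_filter.mp hj).2.symm)
  simpa using (card_le_card hsub).trans (card_biUnion_le_card_mul _ _ 1 hfiber)

theorem exists_injective_mem_allowedColors [Fintype ι]
    (hψ : ∀ w, Function.Injective (ψ · w)) (hι : Fintype.card ι ≤ Fintype.card α)
    (hN : Fintype.card N ≤ Fintype.card α / 2) :
    ∃ f : ι → α, Function.Injective f ∧ ∀ i, f i ∈ allowedColors τ ψ i := by
  classical
  refine exists_injective_mem_of_le_card _ (Fintype.card α - Fintype.card N) hι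
    (fun i => ?_) (fun c => (card_filter_not_mem_allowedColors_le τ ψ hψ c).trans (by omega))
  have := card_compl_allowedColors_le τ ψ i
  rw [card_compl] at this
  omega

end AllowedColors

section ExtendAt

variable {V ι α : Type*} [DecidableEq V] {v : V}

def extendAt (v : V) (φ : ι → {x // x ≠ v} → α) (f : ι → α) (i : ι) (u : V) : α :=
  if h : u = v then f i else φ i ⟨u, h⟩

theorem extendAt_injective {φ : ι → {x // x ≠ v} → α} {f : ι → α}
    (hφ : ∀ u, Function.Injective fun i => φ i u) (hf : Function.Injective f) (u : V) :
    Function.Injective fun i => extendAt v φ f i u := by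
  by_cases hu : u = v
  · simpa [extendAt, hu] using hf
  · simpa [extendAt, hu] using hφ ⟨u, hu⟩

theorem extendAt_ne {G : SimpleGraph V} (σ : ∀ u w : V, G.Adj u w → (α ≃ α))
    (hσ : ∀ (u w : V) (h : G.Adj u w), σ w u h.symm = (σ u w h).symm)
    {φ : ι → {x // x ≠ v} → α} {f : ι → α}
    (hφ : ∀ (i : ι) (u w : {x // x ≠ v}) (h : (G.comap Subtype.val).Adj u w),
      σ u w h (φ i u) ≠ φ i w)
    (hf : ∀ (i : ι) (w : V) (h : G.Adj v w), σ v w h (f i) ≠ φ i ⟨w, (G.ne_of_adj h).symm⟩)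
    (i : ι) (u w : V) (h : G.Adj u w) :
    σ u w h (extendAt v φ f i u) ≠ extendAt v φ f i w := by
  by_cases hu : u = v <;> by_cases hw : w = v
  · subst hu hw
    exact (G.loopless.irrefl _ h).elim
  · subst hu
    simpa [extendAt, hw] using hf i w h
  · subst hw
    have := hf i u h.symm
    rw [hσ u w h] at this
    simp only [extendAt, hu, dite_false, dite_true]
    exact fun heq => this ((Equiv.symm_apply_eq _).mpr heq.symm)
  · simpa [extendAt, hu, hw] using hφ i ⟨u, hu⟩ ⟨w, hw⟩ h

end ExtendAt

theorem stmt19 {V : Type*} [Fintype V] [DecidableEq V]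
    (G : SimpleGraph V) [DecidableRel G.Adj] (v : V) (k : ℕ)
    (hGv : ∀ σ : ∀ u w : {x : V // x ≠ v},
        (G.comap (Subtype.val : {x : V // x ≠ v} → V)).Adj u w → (Fin k ≃ Fin k),
      (∀ (u w : {x : V // x ≠ v})
          (h : (G.comap (Subtype.val : {x : V // x ≠ v} → V)).Adj u w),
        σ w u h.symm = (σ u w h).symm) →
      ∃ φ : Fin k → {x : V // x ≠ v} → Fin k,
        (∀ (i : Fin k) (u w : {x : V // x ≠ v})
            (h : (G.comap (Subtype.val : {x : V // x ≠ v} → V)).Adj u w),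
          σ u w h (φ i u) ≠ φ i w) ∧
        (∀ u, Function.Injective fun i => φ i u))
    (hdeg : G.degree v ≤ k / 2)
    (σ : ∀ u w : V, G.Adj u w → (Fin k ≃ Fin k))
    (hσ : ∀ (u w : V) (h : G.Adj u w), σ w u h.symm = (σ u w h).symm) :
    ∃ φ : Fin k → V → Fin k,
      (∀ (i : Fin k) (u w : V) (h : G.Adj u w), σ u w h (φ i u) ≠ φ i w) ∧
      (∀ u : V, Function.Injective fun i => φ i u) := by
  obtain ⟨φ, hφ, hφinj⟩ := hGv (fun u w h => σ u w h) (fun u w h => hσ u w h)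
  let τ : G.neighborSet v → Fin k ≃ Fin k := fun w => σ v w w.2
  let ψ : Fin k → G.neighborSet v → Fin k := fun i w => φ i ⟨w, (G.ne_of_adj w.2).symm⟩
  obtain ⟨f, hfinj, hf⟩ := exists_injective_mem_allowedColors τ ψ
    (fun w => hφinj _) le_rfl (by rwa [G.card_neighborSet_eq_degree, Fintype.card_fin])
  have hfv : ∀ i w (h : G.Adj v w), σ v w h (f i) ≠ φ i ⟨w, (G.ne_of_adj h).symm⟩ :=
    fun i w h => (mem_filter.mp (hf i)).2 ⟨w, h⟩
  exact ⟨extendAt v φ f, extendAt_ne σ hσ hφ hfv, extendAt_injective hφinj hfinj⟩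
end
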